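/- arXiv:math/0202026 — 6 statements merged into one kernel-verified Lean document; each statement's English description precedes it below -/
import Mathlib

section
/- Let n ≥ 1 and let B(n) be the braid of length n over k. For every integer j ≥ 1 let a_j denote the largest integer k ≥ 0 such that V^j(B(n)) ⊆ p^k·B(n). Then the sequence a_j/j converges as j → ∞, and its limit (the first Newton slope of B(n)) equals 1/2 if n is odd, and equals (n/2 − 1)/n if n is even. -/
open WittVector

/-- The operator `V` of the braid `B(n)` over `W(k)`, in coordinates with respect to the
basis `e₁,…,eₙ` (first component) and `f₁,…,fₙ` (second component), 0-indexed:
`V eᵢ = f_{i+1}` for `i ≤ n−1`, `V eₙ = (−1)ⁿ p f₁`, `V fᵢ = p e_{i+1}` for `i ≤ n−1`,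
`V fₙ = e₁` (the latter two values being determined by `FV = VF = p`), and `V` is
`σ⁻¹`-semilinear. -/
noncomputable def braidV (p : ℕ) [Fact p.Prime] (k : Type*) [Field k] [CharP k p]
    [PerfectRing k p] (n : ℕ) :
    ((Fin n → WittVector p k) × (Fin n → WittVector p k)) →
      ((Fin n → WittVector p k) × (Fin n → WittVector p k)) :=
  fun x =>
    (fun i => if i.val = 0
        then (WittVector.frobeniusEquiv p k).symm (x.2 ⟨n - 1, by have := i.isLt; omega⟩)
        else (p : WittVector p k) *
          (WittVector.frobeniusEquiv p k).symm (x.2 ⟨i.val - 1, by have := i.isLt; omega⟩),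
     fun i => if i.val = 0
        then (-1) ^ n * (p : WittVector p k) *
          (WittVector.frobeniusEquiv p k).symm (x.1 ⟨n - 1, by have := i.isLt; omega⟩)
        else (WittVector.frobeniusEquiv p k).symm (x.1 ⟨i.val - 1, by have := i.isLt; omega⟩))

/-- `V^j(B(n)) ⊆ p^a · B(n)`. -/
def braidVpow_sub (p : ℕ) [Fact p.Prime] (k : Type*) [Field k] [CharP k p]
    [PerfectRing k p] (n j a : ℕ) : Prop :=
  ∀ x : (Fin n → WittVector p k) × (Fin n → WittVector p k),
    ∃ y, (braidV p k n)^[j] x = (p : WittVector p k) ^ a • y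

/-!
In the basis `e₁, …, eₙ, f₁, …, fₙ` the operator `V` is monomial: it carries each basis
vector to a unit times a power of `p` times the next basis vector along the cycle
`e₁ → f₂ → e₃ → ⋯`, which has period `2n`. Hence `V^j(B(n)) ⊆ p^a B(n)` exactly when `a`
is at most the number of factors `p` collected along every path of `j` steps, so `a_j` is
the least such count. Along a full period every path collects `n` factors of `p` when `n`
is odd, and `n ± 2` factors when `n` is even, the minimum `n - 2` being attained from `e₁`;
the slope is therefore `n / 2n` or `(n - 2) / 2n`.
-/

open Filter Topology Finset
open Fin.NatCast Fin.CommRing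

section OrbitWeight

variable {ι : Type*} (π : ι → ι) (w : ι → ℕ)

def orbitWeight (j : ℕ) (c : ι) : ℕ := ∑ t ∈ range j, w (π^[t] c)

variable {π w}

theorem orbitWeight_succ (j : ℕ) (c : ι) :
    orbitWeight π w (j + 1) c = orbitWeight π w j c + w (π^[j] c) :=
  sum_range_succ _ _

theorem orbitWeight_add (i j : ℕ) (c : ι) :
    orbitWeight π w (i + j) c = orbitWeight π w i c + orbitWeight π w j (π^[i] c) := by
  simp only [orbitWeight, sum_range_add, ← Function.iterate_add_apply, add_comm]

theorem orbitWeight_le (hw : ∀ c, w c ≤ 1) (j : ℕ) (c : ι) : orbitWeight π w j c ≤ j :=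
  (sum_le_card_nsmul _ _ 1 fun t _ => hw _).trans (by simp)

theorem orbitWeight_mul_add {L : ℕ} (hπ : π^[L] = id) (q r : ℕ) (c : ι) :
    orbitWeight π w (q * L + r) c = q * orbitWeight π w L c + orbitWeight π w r c := by
  induction q with
  | zero => simp
  | succ q ih =>
    rw [show (q + 1) * L + r = L + (q * L + r) by ring, orbitWeight_add, hπ, id, ih]
    ring

end OrbitWeight

section MonomialOperator

variable {R M ι : Type*} [CommRing R] [AddCommGroup M] [Module R M]
  (e : M ≃ₗ[R] (ι → R)) {T : M → M} {φ : R →+* R} {ϖ : R} {π : ι → ι} {w : ι → ℕ}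

theorem associated_iterate (hφ : φ ϖ = ϖ)
    (hT : ∀ x c, Associated (e (T x) c) (ϖ ^ w c * φ (e x (π c)))) (j : ℕ) (x : M) (c : ι) :
    Associated (e (T^[j] x) c) (ϖ ^ orbitWeight π w j c * (φ ^ j) (e x (π^[j] c))) := by
  induction j generalizing x with
  | zero => simp [orbitWeight]
  | succ j ih =>
    have hφj : (φ ^ j) ϖ = ϖ := by
      rw [RingHom.coe_pow]; exact Function.iterate_fixed hφ j
    have step := ((hT x (π^[j] c)).map (φ ^ j)).mul_left (ϖ ^ orbitWeight π w j c)
    rw [map_mul, map_pow, hφj, ← Function.iterate_succ_apply' π] at step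
    rw [Function.iterate_succ_apply]
    refine (ih (T x)).trans (step.trans (.of_eq ?_))
    rw [orbitWeight_succ, pow_succ φ, RingHom.mul_def, RingHom.comp_apply, pow_add]
    ring

variable [IsDomain R]

theorem forall_exists_iterate_eq_pow_smul_iff (hϖ : Irreducible ϖ) (hφ : φ ϖ = ϖ)
    (hT : ∀ x c, Associated (e (T x) c) (ϖ ^ w c * φ (e x (π c)))) (j a : ℕ) :
    (∀ x, ∃ y, T^[j] x = ϖ ^ a • y) ↔ ∀ c, a ≤ orbitWeight π w j c := by
  have hpow : ∀ c, a ≤ orbitWeight π w j c ↔ ϖ ^ a ∣ ϖ ^ orbitWeight π w j c := fun c =>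
    (pow_dvd_pow_iff hϖ.ne_zero hϖ.not_isUnit).symm
  simp only [hpow]
  constructor
  · intro h c
    obtain ⟨y, hy⟩ := h (e.symm 1)
    have hc := associated_iterate e hφ hT j (e.symm 1) c
    simp only [LinearEquiv.apply_symm_apply, Pi.one_apply, map_one, mul_one] at hc
    rw [← hc.dvd_iff_dvd_right, hy, map_smul]
    exact Dvd.intro _ rfl
  · intro h x
    choose z hz using fun c =>
      ((h c).trans (Dvd.intro _ rfl)).trans (associated_iterate e hφ hT j x c).symm.dvd
    exact ⟨e.symm z, e.injective (by rw [map_smul, LinearEquiv.apply_symm_apply]; exact funext hz)⟩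

theorem setOf_forall_exists_iterate_eq_pow_smul (hϖ : Irreducible ϖ) (hφ : φ ϖ = ϖ)
    (hT : ∀ x c, Associated (e (T x) c) (ϖ ^ w c * φ (e x (π c)))) (j : ℕ) :
    {a | ∀ x, ∃ y, T^[j] x = ϖ ^ a • y} = lowerBounds (Set.range (orbitWeight π w j)) := by
  ext a
  simp [forall_exists_iterate_eq_pow_smul_iff e hϖ hφ hT, mem_lowerBounds]

end MonomialOperator

theorem tendsto_div_of_abs_sub_mul_le {f : ℕ → ℝ} {s C : ℝ}
    (h : ∀ᶠ j in atTop, |f j - j * s| ≤ C) : Tendsto (fun j => f j / j) atTop (𝓝 s) := by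
  have hdiff : Tendsto (fun j : ℕ => f j / j - s) atTop (𝓝 0) := by
    refine squeeze_zero_norm' ?_ (tendsto_const_div_atTop_nhds_zero_nat C)
    filter_upwards [h, eventually_gt_atTop 0] with j hj hj0
    have hj' : (0 : ℝ) < j := Nat.cast_pos.mpr hj0
    rw [Real.norm_eq_abs, show f j / j - s = (f j - j * s) / j by field_simp, abs_div,
      Nat.abs_cast]
    exact div_le_div_of_nonneg_right hj hj'.le
  simpa using hdiff.add_const s

theorem tendsto_isGLB_orbitWeight_div {ι : Type*} {π : ι → ι} {w : ι → ℕ} {L : ℕ} (hL : 0 < L)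
    (hπ : π^[L] = id) (hw : ∀ c, w c ≤ 1) {c₀ : ι}
    (hc₀ : ∀ c, orbitWeight π w L c₀ ≤ orbitWeight π w L c) (a : ℕ → ℕ)
    (ha : ∀ j, 1 ≤ j → IsGLB (Set.range (orbitWeight π w j)) (a j)) :
    Tendsto (fun j => (a j : ℝ) / j) atTop (𝓝 ((orbitWeight π w L c₀ : ℝ) / L)) := by
  set m := orbitWeight π w L c₀
  refine tendsto_div_of_abs_sub_mul_le (C := L + m) ?_
  filter_upwards [eventually_ge_atTop 1] with j hj
  obtain ⟨q, r, hr, rfl⟩ : ∃ q r, r < L ∧ j = q * L + r :=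
    ⟨j / L, j % L, Nat.mod_lt _ hL, (Nat.div_add_mod' j L).symm⟩
  have hlow : q * m ≤ a (q * L + r) := (ha _ hj).2 <| by
    rintro _ ⟨c, rfl⟩
    rw [orbitWeight_mul_add hπ]
    exact le_add_right (Nat.mul_le_mul_left q (hc₀ c))
  have hhigh : a (q * L + r) ≤ q * m + r := by
    refine ((ha _ hj).1 ⟨c₀, rfl⟩).trans ?_
    rw [orbitWeight_mul_add hπ]
    exact Nat.add_le_add_left (orbitWeight_le hw r c₀) _
  have hL' : (0 : ℝ) < L := Nat.cast_pos.mpr hL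
  have hrm : (r : ℝ) * (m / L) ≤ m := by
    rw [← mul_div_assoc, div_le_iff₀ hL', mul_comm]
    exact mul_le_mul_of_nonneg_left (by exact_mod_cast hr.le) (Nat.cast_nonneg m)
  have hsplit : ((q * L + r : ℕ) : ℝ) * (m / L) = q * m + r * (m / L) := by
    push_cast; field_simp
  have hlow' : (q : ℝ) * m ≤ a (q * L + r) := by exact_mod_cast hlow
  have hhigh' : (a (q * L + r) : ℝ) ≤ q * m + r := by exact_mod_cast hhigh
  have hr' : (r : ℝ) ≤ L := by exact_mod_cast hr.le
  have hrm0 : 0 ≤ (r : ℝ) * (m / L) := by positivity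
  rw [hsplit, abs_sub_le_iff]
  constructor <;> linarith

section Coordinates

variable (R : Type*) {M α : Type*} [Semiring R] [AddCommMonoid M] [Module R M]

def prodArrowLequivZModTwoProdArrow : ((α → M) × (α → M)) ≃ₗ[R] (ZMod 2 × α → M) where
  toFun x c := if c.1 = 0 then x.1 c.2 else x.2 c.2
  invFun f := (fun i => f (0, i), fun i => f (1, i))
  map_add' x y := by ext c; by_cases h : c.1 = 0 <;> simp [h]
  map_smul' r x := by ext c; by_cases h : c.1 = 0 <;> simp [h]
  left_inv x := by simp
  right_inv f := by ext ⟨b, i⟩; fin_cases b <;> rfl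

end Coordinates

theorem Fin.val_zero_sub_one (n : ℕ) [NeZero n] : ((0 : Fin n) - 1).val = n - 1 := by
  obtain ⟨m, rfl⟩ := Nat.exists_eq_succ_of_ne_zero (NeZero.ne n)
  simp

section Braid

variable (n : ℕ) [NeZero n]

/- The coordinate `(0, i)` is that of `e_{i+1}` and `(1, i)` that of `f_{i+1}`. Up to a unit, the
`c`-coordinate of `V x` is `p ^ braidWeight c` times `σ⁻¹` of the `braidShift c`-coordinate of
`x`. -/
def braidShift (c : ZMod 2 × Fin n) : ZMod 2 × Fin n := (c.1 + 1, c.2 - 1)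

def braidWeight (c : ZMod 2 × Fin n) : ℕ := if (c.1 = 1 ↔ c.2 = 0) then 1 else 0

theorem braidWeight_le_one (c : ZMod 2 × Fin n) : braidWeight n c ≤ 1 := by
  unfold braidWeight; split_ifs <;> omega

theorem braidShift_iterate (t : ℕ) (c : ZMod 2 × Fin n) :
    (braidShift n)^[t] c = (c.1 + t, c.2 - t) := by
  induction t with
  | zero => simp
  | succ t ih =>
    rw [Function.iterate_succ_apply', ih, braidShift]
    push_cast
    exact Prod.ext (add_assoc _ _ _) (sub_sub _ _ _)

theorem braidShift_iterate_two_mul : (braidShift n)^[2 * n] = id := by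
  funext c
  rw [braidShift_iterate]
  push_cast
  rw [Fin.natCast_self, show (2 : ZMod 2) = 0 from rfl]
  simp

variable (p : ℕ) [Fact p.Prime] (k : Type*) [Field k] [CharP k p] [PerfectRing k p]

theorem braidV_fst_apply (x : (Fin n → WittVector p k) × (Fin n → WittVector p k)) (i : Fin n) :
    (braidV p k n x).1 i =
      (if i = 0 then 1 else (p : WittVector p k)) * (frobeniusEquiv p k).symm (x.2 (i - 1)) := by
  by_cases hi : i = 0
  · subst hi
    simp only [braidV, Fin.val_zero, if_true, one_mul]
    congr 2
    exact congrArg _ (Fin.ext (Fin.val_zero_sub_one n).symm)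
  · simp only [braidV, Fin.val_eq_zero_iff, hi, if_false]
    congr 3
    exact congrArg _ (Fin.ext (Fin.val_sub_one_of_ne_zero hi).symm)

theorem braidV_snd_apply (x : (Fin n → WittVector p k) × (Fin n → WittVector p k)) (i : Fin n) :
    (braidV p k n x).2 i =
      (if i = 0 then (-1) ^ n * (p : WittVector p k) else 1) *
        (frobeniusEquiv p k).symm (x.1 (i - 1)) := by
  by_cases hi : i = 0
  · subst hi
    simp only [braidV, Fin.val_zero, if_true]
    congr 3
    exact congrArg _ (Fin.ext (Fin.val_zero_sub_one n).symm)
  · simp only [braidV, Fin.val_eq_zero_iff, hi, if_false, one_mul]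
    congr 2
    exact congrArg _ (Fin.ext (Fin.val_sub_one_of_ne_zero hi).symm)

theorem associated_braidV (x : (Fin n → WittVector p k) × (Fin n → WittVector p k))
    (c : ZMod 2 × Fin n) :
    Associated (prodArrowLequivZModTwoProdArrow (WittVector p k) (braidV p k n x) c)
      ((p : WittVector p k) ^ braidWeight n c * (frobeniusEquiv p k).symm.toRingHom
        (prodArrowLequivZModTwoProdArrow (WittVector p k) x (braidShift n c))) := by
  obtain ⟨b, i⟩ := c
  have h01 : (0 : ZMod 2) ≠ 1 := by decide
  have h11 : (1 : ZMod 2) + 1 = 0 := rfl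
  obtain rfl | rfl : b = 0 ∨ b = 1 := by revert b; decide
  all_goals by_cases hi : i = 0 <;>
    simp [prodArrowLequivZModTwoProdArrow, braidShift, braidWeight,
      braidV_fst_apply, braidV_snd_apply, hi, h01, h01.symm, h11, -frobeniusEquiv_symm_apply]
  rw [mul_assoc]
  exact associated_unit_mul_left _ _ (isUnit_one.neg.pow n)

theorem setOf_braidVpow_sub (j : ℕ) :
    {a | braidVpow_sub p k n j a} =
      lowerBounds (Set.range (orbitWeight (braidShift n) (braidWeight n) j)) :=
  setOf_forall_exists_iterate_eq_pow_smul (prodArrowLequivZModTwoProdArrow (WittVector p k))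
    (WittVector.irreducible p) (map_natCast _ p) (associated_braidV n p k) j

end Braid

section BraidWeight

theorem sum_range_two_mul_ite_add_eq_zero (b : ZMod 2) (m : ℕ) :
    ∑ t ∈ range (2 * m), (if b + t = 0 then (1 : ℤ) else 0) = m := by
  have hpair : ∀ b : ZMod 2, (if b = 0 then (1 : ℤ) else 0) + (if b + 1 = 0 then 1 else 0) = 1 := by
    decide
  induction m with
  | zero => simp
  | succ m ih =>
    rw [mul_add, mul_one, sum_range_succ, sum_range_succ, ih]
    push_cast
    rw [show (2 : ZMod 2) = 0 from rfl, zero_mul, add_zero, zero_add, add_assoc, hpair]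

theorem Fin.sum_range_two_mul_ite_sub_eq_zero {n : ℕ} [NeZero n] (i : Fin n) (g : ℕ → ℤ) :
    ∑ t ∈ range (2 * n), (if i - t = 0 then g t else 0) = g i + g (n + i) := by
  have hcast : ∀ t ∈ range n, (i - t = 0 ↔ i.val = t) := fun t ht => by
    rw [sub_eq_zero, Fin.ext_iff, Fin.val_natCast, Nat.mod_eq_of_lt (mem_range.mp ht)]
  rw [two_mul, sum_range_add]
  simp only [Nat.cast_add, Fin.natCast_self, zero_add]
  rw [sum_congr rfl fun t ht => if_congr (hcast t ht) rfl rfl,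
    sum_congr rfl fun t ht => if_congr (hcast t ht) rfl rfl, sum_ite_eq, sum_ite_eq]
  simp

variable (n : ℕ) [NeZero n]

theorem braidWeight_eq (c : ZMod 2 × Fin n) :
    (braidWeight n c : ℤ) =
      (if c.1 = 0 then 1 else 0) + if c.2 = 0 then (if c.1 = 0 then -1 else 1) else 0 := by
  obtain ⟨b, i⟩ := c
  obtain rfl | rfl : b = 0 ∨ b = 1 := by revert b; decide
  all_goals by_cases hi : i = 0 <;> simp [braidWeight, hi]

/- By `braidWeight_eq`, the parity term contributes `n` over a period, and the correction term
only counts at the two steps `t = i` and `t = n + i` that land in position `0`. -/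
theorem orbitWeight_braid_two_mul (b : ZMod 2) (i : Fin n) :
    (orbitWeight (braidShift n) (braidWeight n) (2 * n) (b, i) : ℤ) =
      n + (if b + i.val = 0 then -1 else 1) + (if b + (n + i.val : ℕ) = 0 then -1 else 1) := by
  simp only [orbitWeight, Nat.cast_sum, braidShift_iterate, braidWeight_eq, sum_add_distrib,
    sum_range_two_mul_ite_add_eq_zero]
  rw [Fin.sum_range_two_mul_ite_sub_eq_zero i fun t => if b + (t : ZMod 2) = 0 then -1 else 1,
    add_assoc]

theorem orbitWeight_braid_two_mul_of_odd (hn : Odd n) (c : ZMod 2 × Fin n) :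
    orbitWeight (braidShift n) (braidWeight n) (2 * n) c = n := by
  obtain ⟨b, i⟩ := c
  have h := orbitWeight_braid_two_mul n b i
  have hχ : ∀ x : ZMod 2, (if x = 0 then (-1 : ℤ) else 1) + (if x + 1 = 0 then -1 else 1) = 0 := by
    decide
  rw [Nat.cast_add, ZMod.natCast_eq_one_iff_odd.mpr hn, add_left_comm,
    add_comm (1 : ZMod 2), add_assoc (n : ℤ), hχ, add_zero] at h
  exact_mod_cast h

theorem orbitWeight_braid_two_mul_of_even (hn : Even n) (b : ZMod 2) (i : Fin n) :
    (orbitWeight (braidShift n) (braidWeight n) (2 * n) (b, i) : ℤ) =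
      n + 2 * (if b + i.val = 0 then -1 else 1) := by
  rw [orbitWeight_braid_two_mul, Nat.cast_add, ZMod.natCast_eq_zero_iff_even.mpr hn, zero_add]
  ring

theorem orbitWeight_braid_two_mul_zero_le (c : ZMod 2 × Fin n) :
    orbitWeight (braidShift n) (braidWeight n) (2 * n) (0, 0) ≤
      orbitWeight (braidShift n) (braidWeight n) (2 * n) c := by
  obtain ⟨b, i⟩ := c
  rcases Nat.even_or_odd n with heven | hodd
  · have h0 := orbitWeight_braid_two_mul_of_even n heven 0 0
    have h := orbitWeight_braid_two_mul_of_even n heven b i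
    simp only [Fin.val_zero, Nat.cast_zero, add_zero, if_true] at h0
    zify
    split_ifs at h <;> linarith
  · simp only [orbitWeight_braid_two_mul_of_odd n hodd, le_refl]

theorem orbitWeight_braid_two_mul_zero_div :
    (orbitWeight (braidShift n) (braidWeight n) (2 * n) (0, 0) : ℝ) / ((2 * n : ℕ) : ℝ) =
      if Odd n then 1 / 2 else ((n : ℝ) / 2 - 1) / n := by
  have hn : (n : ℝ) ≠ 0 := Nat.cast_ne_zero.mpr (NeZero.ne n)
  split_ifs with hodd
  · rw [orbitWeight_braid_two_mul_of_odd n hodd]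
    push_cast
    field_simp
  · have h0 := orbitWeight_braid_two_mul_of_even n (Nat.not_odd_iff_even.mp hodd) 0 0
    simp only [Fin.val_zero, Nat.cast_zero, add_zero, if_true] at h0
    rw [show (orbitWeight (braidShift n) (braidWeight n) (2 * n) (0, 0) : ℝ) = n - 2 by
      exact_mod_cast (by linarith : _ = (n : ℤ) - 2)]
    push_cast
    field_simp

end BraidWeight

theorem stmt0_general (p : ℕ) [Fact p.Prime]
    (k : Type*) [Field k] [CharP k p] [PerfectRing k p]
    (n : ℕ) (hn : 1 ≤ n) :
    (∀ j : ℕ, 1 ≤ j → ∃ a : ℕ, IsGreatest {a : ℕ | braidVpow_sub p k n j a} a) ∧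
    (∀ aseq : ℕ → ℕ, (∀ j : ℕ, 1 ≤ j → IsGreatest {a : ℕ | braidVpow_sub p k n j a} (aseq j)) →
      Filter.Tendsto (fun j => (aseq j : ℝ) / (j : ℝ)) Filter.atTop
        (nhds (if Odd n then 1 / 2 else ((n : ℝ) / 2 - 1) / n))) := by
  have : NeZero n := ⟨by omega⟩
  refine ⟨fun j _ => ⟨_, by
    rw [setOf_braidVpow_sub]; exact isGLB_csInf (Set.range_nonempty _) (OrderBot.bddBelow _)⟩,
    fun aseq haseq => ?_⟩
  rw [← orbitWeight_braid_two_mul_zero_div n]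
  exact tendsto_isGLB_orbitWeight_div (by omega) (braidShift_iterate_two_mul n)
    (braidWeight_le_one n) (orbitWeight_braid_two_mul_zero_le n) aseq fun j hj => by
      simpa only [IsGLB, setOf_braidVpow_sub] using haseq j hj

/-- for every `j ≥ 1` there is a largest `a_j ≥ 0` with
`V^j(B(n)) ⊆ p^{a_j}·B(n)`, and `a_j / j` converges to `1/2` if `n` is odd and to
`(n/2 − 1)/n` if `n` is even (the first Newton slope of `B(n)`). -/
theorem stmt0 (p : ℕ) [Fact p.Prime] (hp : Odd p)
    (k : Type*) [Field k] [IsAlgClosed k] [CharP k p] [PerfectRing k p]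
    (n : ℕ) (hn : 1 ≤ n) :
    (∀ j : ℕ, 1 ≤ j → ∃ a : ℕ, IsGreatest {a : ℕ | braidVpow_sub p k n j a} a) ∧
    (∀ aseq : ℕ → ℕ, (∀ j : ℕ, 1 ≤ j → IsGreatest {a : ℕ | braidVpow_sub p k n j a} (aseq j)) →
      Filter.Tendsto (fun j => (aseq j : ℝ) / (j : ℝ)) Filter.atTop
        (nhds (if Odd n then 1 / 2 else ((n : ℝ) / 2 - 1) / n))) :=
  stmt0_general p k n hn
end

section
/- Let M be a unitary Dieudonné module over k whose signature is (r,0) or (0,r) for some r ≥ 1, i.e. such that V M̄₁ = M̄₀ or V M̄₀ = M̄₁ in the reduction M̄ = M/pM. Then M is superspecial, i.e. FM = VM. -/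
open WittVector

/-- A unitary Dieudonné module over `k`: a finitely generated free `W(k)`-module `M`
with a `σ`-semilinear `F`, a `σ⁻¹`-semilinear `V` satisfying `FV = VF = p`, a grading
`M = M₀ ⊕ M₁` for which `F` and `V` are homogeneous of degree `1`, and a perfect
alternating `W(k)`-bilinear form with `⟨Fx, y⟩ = σ(⟨x, Vy⟩)` for which `M₀` and `M₁`
are totally isotropic. -/
structure UnitaryDieudonneModule (p : ℕ) [Fact p.Prime] (k : Type) [Field k] [CharP k p]
    [PerfectRing k p] where
  carrier : Type
  [isAddCommGroup : AddCommGroup carrier]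
  [isModule : Module (WittVector p k) carrier]
  isFree : Module.Free (WittVector p k) carrier
  isFinite : Module.Finite (WittVector p k) carrier
  F : carrier → carrier
  V : carrier → carrier
  F_add : ∀ x y, F (x + y) = F x + F y
  V_add : ∀ x y, V (x + y) = V x + V y
  F_semilinear : ∀ (c : WittVector p k) (x : carrier),
    F (c • x) = WittVector.frobenius c • F x
  V_semilinear : ∀ (c : WittVector p k) (x : carrier),
    V (WittVector.frobenius c • x) = c • V x
  FV : ∀ x, F (V x) = (p : WittVector p k) • x
  VF : ∀ x, V (F x) = (p : WittVector p k) • x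
  M0 : Submodule (WittVector p k) carrier
  M1 : Submodule (WittVector p k) carrier
  grading : IsCompl M0 M1
  F_M0 : ∀ x ∈ M0, F x ∈ M1
  F_M1 : ∀ x ∈ M1, F x ∈ M0
  V_M0 : ∀ x ∈ M0, V x ∈ M1
  V_M1 : ∀ x ∈ M1, V x ∈ M0
  form : carrier →ₗ[WittVector p k] carrier →ₗ[WittVector p k] WittVector p k
  form_alt : ∀ x, form x x = 0
  form_perfect : Function.Bijective fun x => form x
  form_FV : ∀ x y, form (F x) y = WittVector.frobenius (form x (V y))
  M0_isotropic : ∀ x ∈ M0, ∀ y ∈ M0, form x y = 0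
  M1_isotropic : ∀ x ∈ M1, ∀ y ∈ M1, form x y = 0

attribute [instance] UnitaryDieudonneModule.isAddCommGroup UnitaryDieudonneModule.isModule

namespace UnitaryDieudonneModule

variable {p : ℕ} [Fact p.Prime] {k : Type} [Field k] [CharP k p] [PerfectRing k p]
variable (M : UnitaryDieudonneModule p k)

/-- The module is torsion-free: `p • x = 0` implies `x = 0` (via the perfect form). -/
theorem torsionfree {x : M.carrier} (h : (p : WittVector p k) • x = 0) : x = 0 := by
  have hinj : Function.Injective fun x => M.form x := M.form_perfect.1
  have h0 : M.form x = M.form 0 := by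
    refine LinearMap.ext fun m => ?_
    rw [map_zero, LinearMap.zero_apply]
    have h1 : M.form ((p : WittVector p k) • x) m = 0 := by rw [h, map_zero, LinearMap.zero_apply]
    rw [map_smul, LinearMap.smul_apply, smul_eq_mul] at h1
    exact (mul_eq_zero.mp h1).resolve_left (WittVector.p_nonzero p k)
  exact hinj h0

theorem V_injective : Function.Injective M.V := by
  intro a b hab
  have h1 : (p : WittVector p k) • a = (p : WittVector p k) • b := by
    rw [← M.FV a, ← M.FV b, hab]
  have h2 : (p : WittVector p k) • (a - b) = 0 := by rw [smul_sub, h1, sub_self]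
  have := M.torsionfree h2
  rwa [sub_eq_zero] at this

/-- If all pairings of `x` against the module are divisible by `p`, then `x ∈ pM`. -/
theorem mem_p (x : M.carrier)
    (h : ∀ m, ∃ c, M.form x m = (p : WittVector p k) * c) :
    ∃ y, x = (p : WittVector p k) • y := by
  choose c hc using h
  have pne : (p : WittVector p k) ≠ 0 := WittVector.p_nonzero p k
  have hadd : ∀ m n, c (m + n) = c m + c n := by
    intro m n
    apply mul_left_cancel₀ pne
    rw [← hc, map_add, hc, hc, mul_add]
  have hsmul : ∀ (a : WittVector p k) (m : M.carrier), c (a • m) = a * c m := by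
    intro a m
    apply mul_left_cancel₀ pne
    rw [← hc, map_smul, smul_eq_mul, hc]
    ring
  let ψ : M.carrier →ₗ[WittVector p k] WittVector p k :=
    { toFun := c
      map_add' := hadd
      map_smul' := by intro a m; simpa using hsmul a m }
  obtain ⟨y, hy⟩ := M.form_perfect.2 ψ
  have hy' : M.form y = ψ := hy
  refine ⟨y, M.form_perfect.1 (LinearMap.ext fun m => ?_)⟩
  show M.form x m = M.form ((p : WittVector p k) • y) m
  rw [map_smul, LinearMap.smul_apply, hy', hc m]
  simp [ψ, smul_eq_mul]

theorem F_p_smul (z : M.carrier) :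
    M.F ((p : WittVector p k) • z) = (p : WittVector p k) • M.F z := by
  rw [M.F_semilinear, map_natCast]

/-- Key abstract lemma, symmetric in the two graded pieces. -/
theorem key (A B : Submodule (WittVector p k) M.carrier)
    (hsup : A ⊔ B = ⊤)
    (hFB : ∀ x ∈ B, M.F x ∈ A)
    (hVA : ∀ x ∈ A, M.V x ∈ B)
    (hVB : ∀ x ∈ B, M.V x ∈ A)
    (hisoB : ∀ x ∈ B, ∀ y ∈ B, M.form x y = 0)
    (hsig : ∀ x ∈ A, ∃ y ∈ B, ∃ z : M.carrier, x = M.V y + (p : WittVector p k) • z) :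
    Set.range M.F = Set.range M.V := by
  have hdecomp : ∀ m : M.carrier, ∃ a ∈ A, ∃ b ∈ B, a + b = m := by
    intro m
    have : m ∈ A ⊔ B := by rw [hsup]; exact Submodule.mem_top
    obtain ⟨a, ha, b, hb, hab⟩ := Submodule.mem_sup.mp this
    exact ⟨a, ha, b, hb, hab⟩
  -- Claim A : V A ⊆ pM
  have claimA : ∀ x ∈ A, ∃ z, M.V x = (p : WittVector p k) • z := by
    intro x hx
    apply M.mem_p
    intro m
    obtain ⟨a, ha, b, hb, hab⟩ := hdecomp m
    obtain ⟨y, hy, z, hz⟩ := hsig a ha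
    -- pairing with b vanishes
    have hVxB : M.V x ∈ B := hVA x hx
    have hbb : M.form (M.V x) b = 0 := hisoB _ hVxB b hb
    -- pairing with V y is divisible by p
    obtain ⟨d, hd⟩ := (frobenius_bijective p k).2 (M.form x y)
    have hVV : M.form (M.V x) (M.V y) = (p : WittVector p k) * d := by
      apply (frobenius_bijective p k).1
      rw [← M.form_FV, M.FV, map_smul, LinearMap.smul_apply, smul_eq_mul,
        map_mul, map_natCast, hd]
    refine ⟨d + M.form (M.V x) z, ?_⟩
    calc M.form (M.V x) m = M.form (M.V x) (a + b) := by rw [hab]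
      _ = M.form (M.V x) a + M.form (M.V x) b := by rw [map_add]
      _ = M.form (M.V x) (M.V y + (p : WittVector p k) • z) + 0 := by rw [hz, hbb]
      _ = M.form (M.V x) (M.V y) + (p : WittVector p k) * M.form (M.V x) z := by
          rw [map_add, map_smul, smul_eq_mul, add_zero]
      _ = (p : WittVector p k) * (d + M.form (M.V x) z) := by rw [hVV]; ring
  -- A is contained in the range of F
  have AF : ∀ x ∈ A, ∃ w, x = M.F w := by
    intro x hx
    obtain ⟨z, hz⟩ := claimA x hx
    refine ⟨z, M.V_injective ?_⟩
    rw [hz, M.VF]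
  -- A is contained in the range of V
  have AV : ∀ x ∈ A, ∃ w, x = M.V w := by
    intro x hx
    obtain ⟨y, hy, z, hz⟩ := hsig x hx
    refine ⟨y + M.F z, ?_⟩
    rw [M.V_add, M.VF, hz]
  -- F A ⊆ pM
  have claimAF : ∀ x ∈ A, ∃ z, M.F x = (p : WittVector p k) • z := by
    intro x hx
    obtain ⟨y, hy, z, hz⟩ := hsig x hx
    refine ⟨y + M.F z, ?_⟩
    rw [hz, M.F_add, M.FV, M.F_p_smul, smul_add]
  ext w
  simp only [Set.mem_range]
  constructor
  · rintro ⟨m, rfl⟩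
    obtain ⟨a, ha, b, hb, hab⟩ := hdecomp m
    obtain ⟨za, hza⟩ := claimAF a ha
    obtain ⟨wb, hwb⟩ := AV (M.F b) (hFB b hb)
    refine ⟨M.F za + wb, ?_⟩
    rw [M.V_add, ← hwb, ← hab, M.F_add, hza, ← M.VF]
  · rintro ⟨m, rfl⟩
    obtain ⟨a, ha, b, hb, hab⟩ := hdecomp m
    obtain ⟨za, hza⟩ := claimA a ha
    obtain ⟨wb, hwb⟩ := AF (M.V b) (hVB b hb)
    refine ⟨M.V za + wb, ?_⟩
    rw [M.F_add, ← hwb, ← hab, M.V_add, hza, ← M.FV]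

end UnitaryDieudonneModule

/-- a unitary Dieudonné module of signature `(r,0)` or `(0,r)`, i.e. with
`V M̄₁ = M̄₀` or `V M̄₀ = M̄₁` in the reduction `M̄ = M/pM`, is superspecial: `FM = VM`. -/
theorem stmt1 (p : ℕ) [Fact p.Prime] (hp : Odd p)
    (k : Type) [Field k] [IsAlgClosed k] [CharP k p] [PerfectRing k p]
    (M : UnitaryDieudonneModule p k)
    (hsig : (∀ x ∈ M.M0, ∃ y ∈ M.M1, ∃ z : M.carrier, x = M.V y + (p : WittVector p k) • z)
          ∨ (∀ x ∈ M.M1, ∃ y ∈ M.M0, ∃ z : M.carrier, x = M.V y + (p : WittVector p k) • z)) :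
    Set.range M.F = Set.range M.V := by
  rcases hsig with h | h
  · exact M.key M.M0 M.M1 M.grading.sup_eq_top M.F_M1 M.V_M0 M.V_M1 M.M1_isotropic h
  · exact M.key M.M1 M.M0 M.grading.symm.sup_eq_top M.F_M0 M.V_M1 M.V_M0 M.M0_isotropic h
end

section
/- Let r, m ≥ 1 and let R be a k-algebra. For a homomorphism of graded Dieudonné spaces φ: (S̄^m)_R → B̄(r)_R write φ(g_j) = Σᵢ s_{ij} eᵢ and φ(h_j) = Σᵢ t_{ij} fᵢ. Then φ is uniquely determined by the tuple (s_{r,1},…,s_{r,m}) ∈ R^m: the only possibly nonzero coefficients are s_{ij} = (−1)^{(r−i)/2}·s_{r,j}^{p^{r−i}} for i ≡ r (mod 2) and t_{ij} = (−1)^{(r−i+1)/2}·s_{r,j}^{p^{r−i}} for i ≡ r−1 (mod 2). Moreover, the map φ ↦ (s_{r,1},…,s_{r,m}) is a bijection from the set of graded Dieudonné space homomorphisms (S̄^m)_R → B̄(r)_R onto R^m if r is odd, and onto {(s₁,…,s_m) ∈ R^m : s_j^{p^r} = 0 for all j} if r is even. -/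
open Matrix

/-- Entrywise `p`-th power of a matrix (the matrix of the Frobenius twist `φ^{(p)}`). -/
def mpow (p : ℕ) {I J R : Type*} [CommRing R] (A : Matrix I J R) : Matrix I J R :=
  A.map (· ^ p)

/- Structure matrices of `B̄(r)` (bases `e₁,…,e_r`; `f₁,…,f_r`, 0-indexed). -/
def VB0 (n : ℕ) (R : Type*) [CommRing R] : Matrix (Fin n) (Fin n) R :=
  fun i j => if i.val = j.val + 1 then 1 else 0
def VB1 (n : ℕ) (R : Type*) [CommRing R] : Matrix (Fin n) (Fin n) R :=
  fun i j => if i.val = 0 ∧ j.val = n - 1 then 1 else 0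
def FB0 (n : ℕ) (R : Type*) [CommRing R] : Matrix (Fin n) (Fin n) R :=
  fun i j => if i.val + 1 = j.val then 1 else 0
def FB1 (n : ℕ) (R : Type*) [CommRing R] : Matrix (Fin n) (Fin n) R :=
  fun i j => if i.val = n - 1 ∧ j.val = 0 then (-1) ^ n else 0

/- Structure matrices of `S̄^m` (bases `g₁,…,g_m`; `h₁,…,h_m`). -/
def VS0 (m : ℕ) (R : Type*) [CommRing R] : Matrix (Fin m) (Fin m) R := 1
def VS1 (m : ℕ) (R : Type*) [CommRing R] : Matrix (Fin m) (Fin m) R := 0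
def FS0 (m : ℕ) (R : Type*) [CommRing R] : Matrix (Fin m) (Fin m) R := -1
def FS1 (m : ℕ) (R : Type*) [CommRing R] : Matrix (Fin m) (Fin m) R := 0

/-- A homomorphism of graded Dieudonné spaces `φ : (S̄^m)_R → B̄(r)_R`, written in the
canonical bases: `φ(gⱼ) = Σᵢ Sᵢⱼ eᵢ`, `φ(hⱼ) = Σᵢ Tᵢⱼ fᵢ`, subject to
`V ∘ φ = φ^{(p)} ∘ V` and `φ ∘ F = F ∘ φ^{(p)}`. -/
def IsHomSB (p r m : ℕ) (R : Type*) [CommRing R]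
    (S T : Matrix (Fin r) (Fin m) R) : Prop :=
  VB0 r R * S = mpow p T * VS0 m R ∧
  VB1 r R * T = mpow p S * VS1 m R ∧
  S * FS1 m R = FB1 r R * mpow p T ∧
  T * FS0 m R = FB0 r R * mpow p S


section aux
variable {p r m : ℕ} {R : Type*} [CommRing R]

lemma mpow_apply (A : Matrix (Fin r) (Fin m) R) (i : Fin r) (j : Fin m) :
    mpow p A i j = A i j ^ p := rfl

lemma negpow (hp : Odd p) (a : ℕ) : ((-1 : R) ^ a) ^ p = (-1) ^ a := by
  rcases Nat.even_or_odd a with h | h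
  · rw [h.neg_one_pow, one_pow]
  · rw [h.neg_one_pow, hp.neg_one_pow]

lemma powp (s : R) (d : ℕ) : (s ^ p ^ d) ^ p = s ^ p ^ (d + 1) := by
  rw [← pow_mul, ← pow_succ]

lemma VB0_mul_apply (S : Matrix (Fin r) (Fin m) R) (i : Fin r) (j : Fin m) :
    (VB0 r R * S) i j = if h : 1 ≤ i.val then S ⟨i.val - 1, by omega⟩ j else 0 := by
  rw [Matrix.mul_apply]
  by_cases h1 : 1 ≤ i.val
  · rw [dif_pos h1, Finset.sum_eq_single (⟨i.val - 1, by omega⟩ : Fin r)]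
    · simp only [VB0]; rw [if_pos (by omega), one_mul]
    · intro l _ hl
      simp only [VB0]; rw [if_neg, zero_mul]
      intro hc; exact hl (Fin.ext (by simp; omega))
    · intro hmem; exact absurd (Finset.mem_univ _) hmem
  · rw [dif_neg h1]
    apply Finset.sum_eq_zero; intro l _
    simp only [VB0]; rw [if_neg (by omega), zero_mul]

lemma FB0_mul_apply (S : Matrix (Fin r) (Fin m) R) (i : Fin r) (j : Fin m) :
    (FB0 r R * S) i j = if h : i.val + 1 < r then S ⟨i.val + 1, h⟩ j else 0 := by
  rw [Matrix.mul_apply]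
  by_cases h1 : i.val + 1 < r
  · rw [dif_pos h1, Finset.sum_eq_single (⟨i.val + 1, h1⟩ : Fin r)]
    · simp [FB0]
    · intro l _ hl
      simp only [FB0]; rw [if_neg, zero_mul]
      intro hc; exact hl (Fin.ext (by simp; omega))
    · intro hmem; exact absurd (Finset.mem_univ _) hmem
  · rw [dif_neg h1]
    apply Finset.sum_eq_zero; intro l _
    simp only [FB0]; rw [if_neg (by omega), zero_mul]

lemma VB1_mul_apply (hr : 1 ≤ r) (S : Matrix (Fin r) (Fin m) R) (i : Fin r) (j : Fin m) :
    (VB1 r R * S) i j = if i.val = 0 then S ⟨r - 1, by omega⟩ j else 0 := by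
  rw [Matrix.mul_apply]
  by_cases h1 : i.val = 0
  · rw [if_pos h1, Finset.sum_eq_single (⟨r - 1, by omega⟩ : Fin r)]
    · simp only [VB1]; rw [if_pos (by constructor <;> simp [h1]), one_mul]
    · intro l _ hl
      simp only [VB1]; rw [if_neg, zero_mul]
      intro hc; exact hl (Fin.ext (by simp; omega))
    · intro hmem; exact absurd (Finset.mem_univ _) hmem
  · rw [if_neg h1]
    apply Finset.sum_eq_zero; intro l _
    simp only [VB1]; rw [if_neg (by omega), zero_mul]

lemma FB1_mul_apply (hr : 1 ≤ r) (S : Matrix (Fin r) (Fin m) R) (i : Fin r) (j : Fin m) :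
    (FB1 r R * S) i j = if i.val = r - 1 then (-1) ^ r * S ⟨0, by omega⟩ j else 0 := by
  rw [Matrix.mul_apply]
  by_cases h1 : i.val = r - 1
  · rw [if_pos h1, Finset.sum_eq_single (⟨0, by omega⟩ : Fin r)]
    · simp only [FB1]; rw [if_pos (by constructor <;> simp [h1])]
    · intro l _ hl
      simp only [FB1]; rw [if_neg, zero_mul]
      intro hc; exact hl (Fin.ext (by simp; omega))
    · intro hmem; exact absurd (Finset.mem_univ _) hmem
  · rw [if_neg h1]
    apply Finset.sum_eq_zero; intro l _
    simp only [FB1]; rw [if_neg (by omega), zero_mul]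

end aux

section hom
variable {p r m : ℕ} {R : Type*} [CommRing R] {S T : Matrix (Fin r) (Fin m) R}

lemma hom_T_pow (h : IsHomSB p r m R S T) (i : Fin r) (j : Fin m) :
    T i j ^ p = if h1 : 1 ≤ i.val then S ⟨i.val - 1, by omega⟩ j else 0 := by
  obtain ⟨h1, -, -, -⟩ := h
  simp only [VS0, Matrix.mul_one] at h1
  have := congrFun (congrFun h1 i) j
  rw [VB0_mul_apply] at this
  exact (mpow_apply (p := p) T i j).symm.trans this.symm

lemma hom_T_eq (h : IsHomSB p r m R S T) (i : Fin r) (j : Fin m) :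
    T i j = if h1 : i.val + 1 < r then -(S ⟨i.val + 1, h1⟩ j ^ p) else 0 := by
  obtain ⟨-, -, -, h4⟩ := h
  simp only [FS0, Matrix.mul_neg, Matrix.mul_one] at h4
  have := congrFun (congrFun h4 i) j
  rw [FB0_mul_apply] at this
  simp only [Matrix.neg_apply] at this
  by_cases h1 : i.val + 1 < r
  · rw [dif_pos h1] at this ⊢
    rw [← mpow_apply (p := p), ← this, neg_neg]
  · rw [dif_neg h1] at this ⊢
    rw [← neg_eq_zero, this]

/-- The main induction: entries of `S` and `T` in terms of the bottom row of `S`. -/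
lemma main_formula (hp : Odd p) (h : IsHomSB p r m R S T) (hr : 1 ≤ r) (j : Fin m) :
    ∀ d, (hd : d < r) →
      S ⟨r - 1 - d, by omega⟩ j =
        (if d % 2 = 0 then (-1 : R) ^ (d / 2) * (S ⟨r - 1, by omega⟩ j) ^ p ^ d else 0) ∧
      T ⟨r - 1 - d, by omega⟩ j =
        (if d % 2 = 1 then (-1 : R) ^ ((d + 1) / 2) * (S ⟨r - 1, by omega⟩ j) ^ p ^ d
         else 0) := by
  have hp0 : p ≠ 0 := by rcases hp with ⟨c, hc⟩; omega
  intro d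
  induction d with
  | zero =>
    intro hd
    constructor
    · simp
    · rw [hom_T_eq h, dif_neg (by simp; omega), if_neg (by omega)]
  | succ d ih =>
    intro hd
    obtain ⟨ihS, ihT⟩ := ih (by omega)
    have hiv : r - 1 - d - 1 = r - 1 - (d + 1) := by omega
    have hlt : (r - 1 - d) + 1 - 1 + 1 ≤ r := by omega
    constructor
    · -- S part: S_{r-1-(d+1)} = T_{r-1-d} ^ p
      have key := hom_T_pow h ⟨r - 1 - d, by omega⟩ j
      rw [dif_pos (by simp; omega)] at key
      simp only [hiv] at key
      rw [← key, ihT]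
      rcases Nat.mod_two_eq_zero_or_one d with h2 | h2
      · rw [if_neg (by omega), if_neg (by omega), zero_pow hp0]
      · rw [if_pos h2, if_pos (by omega), mul_pow, negpow hp, powp]
    · -- T part: T_{r-1-(d+1)} = -(S_{r-1-d} ^ p)
      have key := hom_T_eq h ⟨r - 1 - (d + 1), by omega⟩ j
      rw [dif_pos (by simp; omega)] at key
      have hix : (⟨(⟨r - 1 - (d + 1), by omega⟩ : Fin r).val + 1, by simp; omega⟩ : Fin r)
          = ⟨r - 1 - d, by omega⟩ := Fin.ext (by simp; omega)
      rw [hix] at key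
      rw [key, ihS]
      rcases Nat.mod_two_eq_zero_or_one d with h2 | h2
      · rw [if_pos h2, if_pos (by omega), mul_pow, negpow hp, powp]
        have : (d + 1 + 1) / 2 = d / 2 + 1 := by omega
        rw [this, pow_succ]
        ring
      · rw [if_neg (by omega), if_neg (by omega), zero_pow hp0, neg_zero]

end hom

/-- The closed formula for the `S`-matrix of a hom with bottom row `s`. -/
def Sform (p r m : ℕ) (R : Type*) [CommRing R] (s : Fin m → R) :
    Matrix (Fin r) (Fin m) R := fun i j =>
  if (r - 1 - i.val) % 2 = 0 then
    (-1 : R) ^ ((r - 1 - i.val) / 2) * s j ^ p ^ (r - 1 - i.val) else 0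

/-- The closed formula for the `T`-matrix of a hom with bottom row `s`. -/
def Tform (p r m : ℕ) (R : Type*) [CommRing R] (s : Fin m → R) :
    Matrix (Fin r) (Fin m) R := fun i j =>
  if (r - 1 - i.val) % 2 = 1 then
    (-1 : R) ^ ((r - i.val) / 2) * s j ^ p ^ (r - 1 - i.val) else 0

section exist
variable {p r m : ℕ} {R : Type*} [CommRing R]

lemma Tform_top_pow (hp : Odd p) (hr : 1 ≤ r) (s : Fin m → R)
    (hs : Odd r ∨ ∀ j, s j ^ p ^ r = 0) (j : Fin m) :
    Tform p r m R s ⟨0, by omega⟩ j ^ p = 0 := by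
  have hp0 : p ≠ 0 := by rcases hp with ⟨c, hc⟩; omega
  simp only [Tform]
  rcases Nat.mod_two_eq_zero_or_one (r - 1 - 0) with h2 | h2
  · rw [if_neg (by omega), zero_pow hp0]
  · have hre : ¬ Odd r := by rw [Nat.odd_iff]; omega
    have hn := hs.resolve_left hre j
    rw [if_pos (by omega), mul_pow, negpow hp, powp]
    rw [show r - 1 - (⟨0, by omega⟩ : Fin r).val + 1 = r from by
      rw [show ((⟨0, by omega⟩ : Fin r) : ℕ) = 0 from rfl]; omega, hn, mul_zero]

lemma exists_hom (hp : Odd p) (hr : 1 ≤ r) (s : Fin m → R)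
    (hs : Odd r ∨ ∀ j, s j ^ p ^ r = 0) :
    IsHomSB p r m R (Sform p r m R s) (Tform p r m R s) := by
  have hp0 : p ≠ 0 := by rcases hp with ⟨c, hc⟩; omega
  have htop := Tform_top_pow hp hr s hs
  refine ⟨?_, ?_, ?_, ?_⟩
  · -- VB0 * S = mpow p T
    simp only [VS0, Matrix.mul_one]
    funext i j
    rw [VB0_mul_apply, mpow_apply]
    by_cases h1 : 1 ≤ i.val
    · rw [dif_pos h1]
      simp only [Sform, Tform, Fin.val_mk]
      rcases Nat.mod_two_eq_zero_or_one (r - 1 - i.val) with h2 | h2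
      · rw [if_neg (by omega), if_neg (by omega), zero_pow hp0]
      · rw [if_pos (by omega), if_pos h2, mul_pow, negpow hp, powp]
        simp only [show r - 1 - (i.val - 1) = r - 1 - i.val + 1 from by omega,
          show (r - 1 - i.val + 1) / 2 = (r - i.val) / 2 from by omega]
    · rw [dif_neg h1]
      have hi0 : i = ⟨0, by omega⟩ := Fin.ext (show i.val = 0 by omega)
      rw [hi0, htop j]
  · -- VB1 * T = 0
    simp only [VS1, Matrix.mul_zero]
    funext i j
    rw [VB1_mul_apply hr]
    simp only [Matrix.zero_apply, Tform, Fin.val_mk]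
    rcases eq_or_ne i.val 0 with h1 | h1
    · rw [if_pos h1, if_neg (by omega)]
    · rw [if_neg h1]
  · -- 0 = FB1 * mpow p T
    simp only [FS1, Matrix.mul_zero]
    funext i j
    rw [FB1_mul_apply hr]
    simp only [Matrix.zero_apply, mpow_apply]
    rcases eq_or_ne i.val (r - 1) with h1 | h1
    · rw [if_pos h1, htop j, mul_zero]
    · rw [if_neg h1]
  · -- T * (-1) = FB0 * mpow p S
    simp only [FS0, Matrix.mul_neg, Matrix.mul_one]
    funext i j
    rw [Matrix.neg_apply, FB0_mul_apply]
    by_cases h1 : i.val + 1 < r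
    · rw [dif_pos h1, mpow_apply]
      simp only [Sform, Tform, Fin.val_mk]
      rcases Nat.mod_two_eq_zero_or_one (r - 1 - i.val) with h2 | h2
      · rw [if_neg (by omega), if_neg (by omega), neg_zero, zero_pow hp0]
      · rw [if_pos h2, if_pos (by omega), mul_pow, negpow hp, powp]
        simp only [show r - 1 - (i.val + 1) + 1 = r - 1 - i.val from by omega,
          show (r - i.val) / 2 = (r - 1 - (i.val + 1)) / 2 + 1 from by omega, pow_succ]
        ring
    · rw [dif_neg h1]
      simp only [Tform]
      rw [if_neg (by omega), neg_zero]

end exist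
/-- STATEMENT 6: a homomorphism `(S̄^m)_R → B̄(r)_R` is determined by the bottom row
`(s_{r,1},…,s_{r,m})` of `S` through the stated closed formulas, and the bottom-row map
is a bijection onto `R^m` (`r` odd) resp. onto the `p^r`-nilpotent vectors (`r` even). -/
theorem stmt6 (p : ℕ) [Fact p.Prime] (hp : Odd p)
    (k : Type*) [Field k] [IsAlgClosed k] [CharP k p]
    (R : Type*) [CommRing R] [Algebra k R]
    (r m : ℕ) (hr : 1 ≤ r) (hm : 1 ≤ m) :
    (∀ S T : Matrix (Fin r) (Fin m) R, IsHomSB p r m R S T →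
      ∀ (i : Fin r) (j : Fin m),
        (S i j = if (r - 1 - i.val) % 2 = 0 then
            (-1 : R) ^ ((r - 1 - i.val) / 2) * (S ⟨r - 1, by omega⟩ j) ^ (p ^ (r - 1 - i.val))
          else 0) ∧
        (T i j = if (r - 1 - i.val) % 2 = 1 then
            (-1 : R) ^ ((r - i.val) / 2) * (S ⟨r - 1, by omega⟩ j) ^ (p ^ (r - 1 - i.val))
          else 0)) ∧
    (∀ S T S' T' : Matrix (Fin r) (Fin m) R, IsHomSB p r m R S T → IsHomSB p r m R S' T' →
      (∀ j, S ⟨r - 1, by omega⟩ j = S' ⟨r - 1, by omega⟩ j) → S = S' ∧ T = T') ∧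
    (∀ s : Fin m → R, (Odd r ∨ ∀ j, s j ^ (p ^ r) = 0) →
      ∃ S T : Matrix (Fin r) (Fin m) R, IsHomSB p r m R S T ∧
        ∀ j, S ⟨r - 1, by omega⟩ j = s j) ∧
    (Even r → ∀ S T : Matrix (Fin r) (Fin m) R, IsHomSB p r m R S T →
      ∀ j, (S ⟨r - 1, by omega⟩ j) ^ (p ^ r) = 0) := by
  have hp0 : p ≠ 0 := by rcases hp with ⟨c, hc⟩; omega
  have part1 : ∀ S T : Matrix (Fin r) (Fin m) R, IsHomSB p r m R S T →
      ∀ (i : Fin r) (j : Fin m),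
        (S i j = if (r - 1 - i.val) % 2 = 0 then
            (-1 : R) ^ ((r - 1 - i.val) / 2) * (S ⟨r - 1, by omega⟩ j) ^ (p ^ (r - 1 - i.val))
          else 0) ∧
        (T i j = if (r - 1 - i.val) % 2 = 1 then
            (-1 : R) ^ ((r - i.val) / 2) * (S ⟨r - 1, by omega⟩ j) ^ (p ^ (r - 1 - i.val))
          else 0) := by
    intro S T h i j
    have key := main_formula hp h hr j (r - 1 - i.val) (by omega)
    have hix : (⟨r - 1 - (r - 1 - i.val), by omega⟩ : Fin r) = i :=
      Fin.ext (show r - 1 - (r - 1 - i.val) = i.val by omega)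
    rw [hix] at key
    refine ⟨key.1, ?_⟩
    rw [key.2, show r - 1 - i.val + 1 = r - i.val from by omega]
  refine ⟨part1, ?_, ?_, ?_⟩
  · -- uniqueness
    intro S T S' T' h h' hbot
    constructor
    · funext i j
      rw [(part1 S T h i j).1, (part1 S' T' h' i j).1, hbot j]
    · funext i j
      rw [(part1 S T h i j).2, (part1 S' T' h' i j).2, hbot j]
  · -- existence
    intro s hs
    refine ⟨Sform p r m R s, Tform p r m R s, exists_hom hp hr s hs, fun j => ?_⟩
    simp [Sform]
  · -- nilpotency when r is even
    intro hre S T h j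
    have hre' : r % 2 = 0 := Nat.even_iff.mp hre
    have h0 := hom_T_pow h ⟨0, by omega⟩ j
    rw [dif_neg (show ¬ 1 ≤ ((⟨0, by omega⟩ : Fin r) : ℕ) by
      rw [show ((⟨0, by omega⟩ : Fin r) : ℕ) = 0 from rfl]; omega)] at h0
    have hT := (part1 S T h ⟨0, by omega⟩ j).2
    rw [show ((⟨0, by omega⟩ : Fin r) : ℕ) = 0 from rfl] at hT
    rw [if_pos (by omega)] at hT
    rw [hT, mul_pow, negpow hp, powp, show r - 1 - 0 + 1 = r from by omega] at h0
    have hsq : ((-1 : R) ^ ((r - 0) / 2)) * ((-1 : R) ^ ((r - 0) / 2)) = 1 := by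
      rw [← pow_add]
      exact Even.neg_one_pow ⟨(r - 0) / 2, rfl⟩
    calc S ⟨r - 1, by omega⟩ j ^ p ^ r
        = ((-1 : R) ^ ((r - 0) / 2) * (-1 : R) ^ ((r - 0) / 2)) *
            S ⟨r - 1, by omega⟩ j ^ p ^ r := by rw [hsq, one_mul]
      _ = (-1 : R) ^ ((r - 0) / 2) *
            ((-1 : R) ^ ((r - 0) / 2) * S ⟨r - 1, by omega⟩ j ^ p ^ r) := by ring
      _ = (-1 : R) ^ ((r - 0) / 2) * 0 := by rw [h0]
      _ = 0 := mul_zero _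
end

section
/- Let R be a commutative local ring, n ≥ 1, and let N, N' be free R-modules of rank n with R-linear maps u: N → N' and v: N' → N satisfying u∘v = 0 and v∘u = 0. Assume that the image of u is a direct summand of N' which is free of rank m and that the image of v is a direct summand of N which is free of rank l (necessarily m + l ≤ n). Then there exist R-module isomorphisms φ: N ≅ Rⁿ and φ': N' ≅ Rⁿ such that in the corresponding bases u is given by the block matrix U = [[I_m, 0],[0, 0]] and v is given by the block matrix V = [[0,0,0],[0,I_l,0],[0,0,0]] (block sizes m, l, n−m−l in both rows and columns), i.e. φ'∘u∘φ⁻¹ is multiplication by U and φ∘v∘φ'⁻¹ is multiplication by V. -/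
/-- The block matrix `U = [[Iₘ, 0],[0,0]]` (blocks of sizes `m`, `n−m`). -/
def Umat (R : Type*) [CommRing R] (n m : ℕ) : Matrix (Fin n) (Fin n) R :=
  fun i j => if i = j ∧ i.val < m then 1 else 0

/-- The block matrix `V = [[0,0,0],[0,I_l,0],[0,0,0]]` (blocks of sizes `m`, `l`, `n−m−l`). -/
def Vmat (R : Type*) [CommRing R] (n m l : ℕ) : Matrix (Fin n) (Fin n) R :=
  fun i j => if i = j ∧ m ≤ i.val ∧ i.val < m + l then 1 else 0



/-- Auxiliary decomposition: given `u, v` with `u ∘ v = 0`, a complement `C` of `range v`,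
and a section `s` of `u.rangeRestrict`, the module `N` decomposes as
`range u × (range v × (ker u ⊓ C))`, with explicit evaluation facts. -/
theorem aux16 (R : Type*) [CommRing R] {N N' : Type*} [AddCommGroup N] [Module R N]
    [AddCommGroup N'] [Module R N'] (u : N →ₗ[R] N') (v : N' →ₗ[R] N)
    (huv : ∀ y, u (v y) = 0)
    (C : Submodule R N) (hC : IsCompl (LinearMap.range v) C)
    (s : ↥(LinearMap.range u) →ₗ[R] N) (hs : ∀ a, u.rangeRestrict (s a) = a) :
    ∃ φ₀ : N ≃ₗ[R] (↥(LinearMap.range u) × (↥(LinearMap.range v) × ↥(LinearMap.ker u ⊓ C))),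
      (∀ x, (φ₀ x).1 = u.rangeRestrict x) ∧
      (∀ y : N', φ₀ (v y) = (0, (v.rangeRestrict y, 0))) ∧
      (∀ w : ↥(LinearMap.ker u ⊓ C), φ₀ (w : N) = (0, (0, w))) := by
  classical
  set p : N →ₗ[R] ↥(LinearMap.range u) := u.rangeRestrict with hpdef
  have hpcoe : ∀ x, (p x : N') = u x := fun x => rfl
  have hus : ∀ a, u (s a) = (a : N') :=
    fun a => (hpcoe (s a)).symm.trans (congrArg Subtype.val (hs a))
  have hurv : ∀ b : ↥(LinearMap.range v), u (b : N) = 0 := by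
    rintro ⟨_, y, rfl⟩; exact huv y
  set prv : N →ₗ[R] ↥(LinearMap.range v) :=
    (LinearMap.range v).projectionOnto C hC with hprvdef
  have hprv_left : ∀ b : ↥(LinearMap.range v), prv (b : N) = b :=
    fun b => Submodule.projectionOnto_apply_left hC b
  have hprv_right : ∀ z ∈ C, prv z = 0 :=
    fun z hz => (Submodule.projectionOnto_apply_eq_zero_iff hC).mpr hz
  set D : N →ₗ[R] N := LinearMap.id - s ∘ₗ p with hDdef
  have hD : ∀ x, D x = x - s (p x) := fun x => rfl
  have hDker : ∀ x, u (D x) = 0 := by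
    intro x; rw [hD, map_sub, hus, hpcoe, sub_self]
  have hWmem : ∀ x, D x - ((prv (D x) : N)) ∈ LinearMap.ker u ⊓ C := by
    intro x
    refine ⟨?_, ?_⟩
    · have : u (D x - ((prv (D x) : N))) = 0 := by
        rw [map_sub, hDker, hurv, sub_self]
      exact this
    · have h1 : prv (D x - ((prv (D x) : N))) = 0 := by
        rw [map_sub, hprv_left, sub_self]
      exact (Submodule.projectionOnto_apply_eq_zero_iff hC).mp h1
  set W : Submodule R N := LinearMap.ker u ⊓ C with hWdef
  set T : N →ₗ[R] N := D - (LinearMap.range v).subtype ∘ₗ (prv ∘ₗ D) with hTdef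
  have hT : ∀ x, T x = D x - ((prv (D x) : N)) := fun x => rfl
  set F : N →ₗ[R] ↥(LinearMap.range u) × (↥(LinearMap.range v) × ↥W) :=
    p.prod ((prv ∘ₗ D).prod (T.codRestrict W (fun x => hWmem x))) with hFdef
  have hF : ∀ x, F x = (p x, (prv (D x), ⟨T x, hWmem x⟩)) := fun x => rfl
  set G : ↥(LinearMap.range u) × (↥(LinearMap.range v) × ↥W) →ₗ[R] N :=
    (s ∘ₗ LinearMap.fst R _ _)
      + ((LinearMap.range v).subtype ∘ₗ (LinearMap.fst R _ _ ∘ₗ LinearMap.snd R _ _))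
      + (W.subtype ∘ₗ (LinearMap.snd R _ _ ∘ₗ LinearMap.snd R _ _)) with hGdef
  have hG : ∀ z : ↥(LinearMap.range u) × (↥(LinearMap.range v) × ↥W),
      G z = s z.1 + (z.2.1 : N) + (z.2.2 : N) := fun z => rfl
  have hGF : ∀ x, G (F x) = x := by
    intro x
    rw [hF, hG]
    simp only [hT]
    rw [hD]
    abel
  have hwker : ∀ w : ↥W, u (w : N) = 0 := fun w => w.2.1
  have hwC : ∀ w : ↥W, (w : N) ∈ C := fun w => w.2.2
  have hFG : ∀ z, F (G z) = z := by
    rintro ⟨a, b, w⟩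
    have hug : u (G (a, b, w)) = (a : N') := by
      rw [hG, map_add, map_add, hus, hurv, hwker, add_zero, add_zero]
    have hpg : p (G (a, b, w)) = a := Subtype.ext ((hpcoe _).trans hug)
    have hDg : D (G (a, b, w)) = (b : N) + (w : N) := by
      rw [hD, hpg, hG]; abel
    have hprvg : prv (D (G (a, b, w))) = b := by
      rw [hDg, map_add, hprv_left, hprv_right _ (hwC w), add_zero]
    have hTg : T (G (a, b, w)) = (w : N) := by
      rw [hT, hDg, map_add, hprv_left, hprv_right _ (hwC w), add_zero]; abel
    rw [hF]
    refine Prod.ext hpg (Prod.ext hprvg (Subtype.ext ?_))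
    exact hTg
  set φ₀ : N ≃ₗ[R] (↥(LinearMap.range u) × (↥(LinearMap.range v) × ↥W)) :=
    LinearEquiv.ofLinear F G (LinearMap.ext hFG) (LinearMap.ext hGF) with hphidef
  have hφ₀ : ∀ x, φ₀ x = F x := fun x => rfl
  refine ⟨φ₀, fun x => ?_, fun y => ?_, fun w => ?_⟩
  · rw [hφ₀, hF]
  · have hpv : p (v y) = 0 := Subtype.ext (by rw [hpcoe, huv]; rfl)
    have hDv : D (v y) = v y := by rw [hD, hpv, map_zero, sub_zero]
    have hvcoe : ((v.rangeRestrict y : N)) = v y := rfl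
    have hprvv : prv (v y) = v.rangeRestrict y := by
      rw [← hvcoe, hprv_left]
    have hTv : T (v y) = 0 := by rw [hT, hDv, hprvv, hvcoe, sub_self]
    rw [hφ₀, hF, hpv, hDv, hprvv]
    exact Prod.ext rfl (Prod.ext rfl (Subtype.ext hTv))
  · have hpw : p (w : N) = 0 := Subtype.ext (by rw [hpcoe, hwker]; rfl)
    have hDw : D (w : N) = (w : N) := by rw [hD, hpw, map_zero, sub_zero]
    have hprvw : prv ((w : N)) = 0 := hprv_right _ (hwC w)
    have hTw : T (w : N) = (w : N) := by rw [hT, hDw, hprvw]; simp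
    rw [hφ₀, hF, hpw, hDw, hprvw]
    exact Prod.ext rfl (Prod.ext rfl (Subtype.ext hTw))

lemma Umat_mulVec {R : Type*} [CommRing R] (n m : ℕ) (w : Fin n → R) (i : Fin n) :
    (Umat R n m).mulVec w i = if (i : ℕ) < m then w i else 0 := by
  unfold Umat Matrix.mulVec dotProduct
  by_cases h : (i : ℕ) < m
  · simp [h]
  · simp [h]

lemma Vmat_mulVec {R : Type*} [CommRing R] (n m l : ℕ) (w : Fin n → R) (i : Fin n) :
    (Vmat R n m l).mulVec w i = if m ≤ (i : ℕ) ∧ (i : ℕ) < m + l then w i else 0 := by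
  unfold Vmat Matrix.mulVec dotProduct
  by_cases h : m ≤ (i : ℕ) ∧ (i : ℕ) < m + l
  · simp [h]
  · simp [h]

/-- STATEMENT 16: over a commutative local ring, a pair of maps `u : N → N'`, `v : N' → N`
between free modules of rank `n` with `u ∘ v = 0`, `v ∘ u = 0`, whose images are free direct
summands of ranks `m` and `l`, can be put simultaneously in the normal form given by the
block matrices `U` and `V`. -/
theorem stmt16 (R : Type*) [CommRing R] [IsLocalRing R]
    (n m l : ℕ) (N N' : Type*)
    [AddCommGroup N] [Module R N] [AddCommGroup N'] [Module R N']
    (bN : Module.Basis (Fin n) R N) (bN' : Module.Basis (Fin n) R N')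
    (u : N →ₗ[R] N') (v : N' →ₗ[R] N)
    (huv : ∀ y, u (v y) = 0) (hvu : ∀ x, v (u x) = 0)
    (hu_summand : ∃ C : Submodule R N', IsCompl (LinearMap.range u) C)
    (hu_free : Nonempty (Module.Basis (Fin m) R (LinearMap.range u)))
    (hv_summand : ∃ C : Submodule R N, IsCompl (LinearMap.range v) C)
    (hv_free : Nonempty (Module.Basis (Fin l) R (LinearMap.range v))) :
    ∃ (φ : N ≃ₗ[R] (Fin n → R)) (φ' : N' ≃ₗ[R] (Fin n → R)),
      (∀ x : N, φ' (u x) = (Umat R n m).mulVec (φ x)) ∧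
      (∀ y : N', φ (v y) = (Vmat R n m l).mulVec (φ' y)) := by
  classical
  obtain ⟨C, hC⟩ := hv_summand
  obtain ⟨C', hC'⟩ := hu_summand
  obtain ⟨bm⟩ := hu_free
  obtain ⟨bl⟩ := hv_free
  haveI : Module.Free R ↥(LinearMap.range u) := Module.Free.of_basis bm
  haveI : Module.Free R ↥(LinearMap.range v) := Module.Free.of_basis bl
  haveI : Module.Finite R ↥(LinearMap.range u) := Module.Finite.of_basis bm
  haveI : Module.Finite R ↥(LinearMap.range v) := Module.Finite.of_basis bl
  haveI : Module.Finite R N := Module.Finite.of_basis bN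
  haveI : Module.Finite R N' := Module.Finite.of_basis bN'
  obtain ⟨s, hs⟩ := Module.projective_lifting_property u.rangeRestrict LinearMap.id
    u.surjective_rangeRestrict
  obtain ⟨t, ht⟩ := Module.projective_lifting_property v.rangeRestrict LinearMap.id
    v.surjective_rangeRestrict
  have hs' : ∀ a, u.rangeRestrict (s a) = a := fun a => by
    exact DFunLike.congr_fun hs a
  have ht' : ∀ b, v.rangeRestrict (t b) = b := fun b => by
    exact DFunLike.congr_fun ht b
  obtain ⟨φ₀, hφ₀1, hφ₀2, hφ₀3⟩ := aux16 R u v huv C hC s hs'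
  obtain ⟨φ₀', hφ₀'1, hφ₀'2, hφ₀'3⟩ := aux16 R v u hvu C' hC' t ht'
  haveI : Module.Free R N := Module.Free.of_basis bN
  haveI : Module.Free R N' := Module.Free.of_basis bN'
  -- W is finite free
  set r : N →ₗ[R] ↥(LinearMap.ker u ⊓ C) :=
    (LinearMap.snd R ↥(LinearMap.range v) ↥(LinearMap.ker u ⊓ C)) ∘ₗ
      (LinearMap.snd R ↥(LinearMap.range u) (↥(LinearMap.range v) × ↥(LinearMap.ker u ⊓ C))) ∘ₗ
        (φ₀ : N →ₗ[R] ↥(LinearMap.range u) × (↥(LinearMap.range v) × ↥(LinearMap.ker u ⊓ C))) with hrdef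
  have hr : ∀ w : ↥(LinearMap.ker u ⊓ C), r ((w : N)) = w := fun w => by
    have : r ((w : N)) = (φ₀ ((w : N))).2.2 := rfl
    rw [this, hφ₀3]
  haveI : Module.Finite R ↥(LinearMap.ker u ⊓ C) := Module.Finite.of_surjective r (fun w => ⟨(w : N), hr w⟩)
  haveI : Module.Projective R ↥(LinearMap.ker u ⊓ C) := Module.Projective.of_split (LinearMap.ker u ⊓ C).subtype r (LinearMap.ext hr)
  haveI : Module.FinitePresentation R ↥(LinearMap.ker u ⊓ C) := Module.finitePresentation_of_projective R ↥(LinearMap.ker u ⊓ C)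
  haveI : Module.Free R ↥(LinearMap.ker u ⊓ C) := Module.free_of_flat_of_isLocalRing
  -- W' is finite free
  set r' : N' →ₗ[R] ↥(LinearMap.ker v ⊓ C') :=
    (LinearMap.snd R ↥(LinearMap.range u) ↥(LinearMap.ker v ⊓ C')) ∘ₗ
      (LinearMap.snd R ↥(LinearMap.range v) (↥(LinearMap.range u) × ↥(LinearMap.ker v ⊓ C'))) ∘ₗ
        (φ₀' : N' →ₗ[R] ↥(LinearMap.range v) × (↥(LinearMap.range u) × ↥(LinearMap.ker v ⊓ C'))) with hr'def
  have hr' : ∀ w : ↥(LinearMap.ker v ⊓ C'), r' ((w : N')) = w := fun w => by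
    have : r' ((w : N')) = (φ₀' ((w : N'))).2.2 := rfl
    rw [this, hφ₀'3]
  haveI : Module.Finite R ↥(LinearMap.ker v ⊓ C') := Module.Finite.of_surjective r' (fun w => ⟨(w : N'), hr' w⟩)
  haveI : Module.Projective R ↥(LinearMap.ker v ⊓ C') := Module.Projective.of_split (LinearMap.ker v ⊓ C').subtype r' (LinearMap.ext hr')
  haveI : Module.FinitePresentation R ↥(LinearMap.ker v ⊓ C') := Module.finitePresentation_of_projective R ↥(LinearMap.ker v ⊓ C')
  haveI : Module.Free R ↥(LinearMap.ker v ⊓ C') := Module.free_of_flat_of_isLocalRing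
  -- rank computations
  have hfm : Module.finrank R ↥(LinearMap.range u) = m := by
    simpa using Module.finrank_eq_card_basis bm
  have hfl : Module.finrank R ↥(LinearMap.range v) = l := by
    simpa using Module.finrank_eq_card_basis bl
  have hfn : Module.finrank R N = n := by simpa using Module.finrank_eq_card_basis bN
  have hfn' : Module.finrank R N' = n := by simpa using Module.finrank_eq_card_basis bN'
  set k : ℕ := Module.finrank R ↥(LinearMap.ker u ⊓ C) with hkdef
  have hk : m + (l + k) = n := by
    rw [← hfn, φ₀.finrank_eq, Module.finrank_prod, Module.finrank_prod, hfm, hfl]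
  have hk' : Module.finrank R ↥(LinearMap.ker v ⊓ C') = k := by
    have h2 : l + (m + Module.finrank R ↥(LinearMap.ker v ⊓ C')) = n := by
      rw [← hfn', φ₀'.finrank_eq, Module.finrank_prod, Module.finrank_prod, hfm, hfl]
    omega
  set bw : Module.Basis (Fin k) R ↥(LinearMap.ker u ⊓ C) := Module.finBasis R ↥(LinearMap.ker u ⊓ C) with hbwdef
  set bw' : Module.Basis (Fin k) R ↥(LinearMap.ker v ⊓ C') := (Module.finBasis R ↥(LinearMap.ker v ⊓ C')).reindex (finCongr hk') with hbw'def
  -- index equivalences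
  set e : (Fin m ⊕ (Fin l ⊕ Fin k)) ≃ Fin n :=
    ((Equiv.sumCongr (Equiv.refl (Fin m)) finSumFinEquiv).trans finSumFinEquiv).trans
      (finCongr hk) with hedef
  set e' : (Fin l ⊕ (Fin m ⊕ Fin k)) ≃ Fin n :=
    (Equiv.sumAssoc (Fin l) (Fin m) (Fin k)).symm.trans
      ((Equiv.sumCongr (Equiv.sumComm (Fin l) (Fin m)) (Equiv.refl (Fin k))).trans
        ((Equiv.sumAssoc (Fin m) (Fin l) (Fin k)).trans e)) with he'def
  have he1 : ∀ j : Fin m, ((e (Sum.inl j)) : ℕ) = (j : ℕ) := by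
    intro j; simp [hedef]
  have he2 : ∀ j : Fin l, ((e (Sum.inr (Sum.inl j))) : ℕ) = m + (j : ℕ) := by
    intro j; simp [hedef]
  have he3 : ∀ j : Fin k, ((e (Sum.inr (Sum.inr j))) : ℕ) = m + (l + (j : ℕ)) := by
    intro j; simp [hedef, add_assoc]
  have he'1 : ∀ j : Fin l, e' (Sum.inl j) = e (Sum.inr (Sum.inl j)) := by
    intro j; simp [he'def, Equiv.sumAssoc, Equiv.sumComm]
  have he'2 : ∀ j : Fin m, e' (Sum.inr (Sum.inl j)) = e (Sum.inl j) := by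
    intro j; simp [he'def, Equiv.sumAssoc, Equiv.sumComm]
  have he'3 : ∀ j : Fin k, e' (Sum.inr (Sum.inr j)) = e (Sum.inr (Sum.inr j)) := by
    intro j; simp [he'def, Equiv.sumAssoc, Equiv.sumComm]
  -- final bases
  set bNfin : Module.Basis (Fin n) R N := ((bm.prod (bl.prod bw)).map φ₀.symm).reindex e with hbNfin
  set bN'fin : Module.Basis (Fin n) R N' := ((bl.prod (bm.prod bw')).map φ₀'.symm).reindex e'
    with hbN'fin
  have hco : ∀ (x : N) (z : Fin m ⊕ (Fin l ⊕ Fin k)),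
      bNfin.equivFun x (e z) = (bm.prod (bl.prod bw)).repr (φ₀ x) z := by
    intro x z
    rw [Module.Basis.equivFun_apply, hbNfin, Module.Basis.repr_reindex_apply, Equiv.symm_apply_apply,
      Module.Basis.map_repr]
    simp
  have hco' : ∀ (y : N') (z : Fin l ⊕ (Fin m ⊕ Fin k)),
      bN'fin.equivFun y (e' z) = (bl.prod (bm.prod bw')).repr (φ₀' y) z := by
    intro y z
    rw [Module.Basis.equivFun_apply, hbN'fin, Module.Basis.repr_reindex_apply, Equiv.symm_apply_apply,
      Module.Basis.map_repr]
    simp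
  refine ⟨bNfin.equivFun, bN'fin.equivFun, ?_, ?_⟩
  · intro x
    funext i
    obtain ⟨z, rfl⟩ := e.surjective i
    rw [Umat_mulVec]
    rcases z with j | j | j
    · rw [if_pos (by rw [he1]; exact j.isLt)]
      rw [hco, ← he'2 j, hco']
      rw [hφ₀'2 x, Module.Basis.prod_repr_inr, Module.Basis.prod_repr_inl]
      rw [Module.Basis.prod_repr_inl, hφ₀1]
    · rw [if_neg (by rw [he2]; omega)]
      rw [← he'1 j, hco']
      rw [hφ₀'2 x, Module.Basis.prod_repr_inl]
      simp
    · rw [if_neg (by rw [he3]; omega)]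
      rw [← he'3 j, hco']
      rw [hφ₀'2 x, Module.Basis.prod_repr_inr, Module.Basis.prod_repr_inr]
      simp
  · intro y
    funext i
    obtain ⟨z, rfl⟩ := e.surjective i
    rw [Vmat_mulVec]
    rcases z with j | j | j
    · rw [if_neg (by rw [he1]; omega)]
      rw [hco]
      rw [hφ₀2 y, Module.Basis.prod_repr_inl]
      simp
    · rw [if_pos (by rw [he2]; omega)]
      rw [hco, ← he'1 j, hco']
      rw [hφ₀2 y, Module.Basis.prod_repr_inr, Module.Basis.prod_repr_inl]
      rw [Module.Basis.prod_repr_inl, hφ₀'1]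
    · rw [if_neg (by rw [he3]; omega)]
      rw [hco]
      rw [hφ₀2 y, Module.Basis.prod_repr_inr, Module.Basis.prod_repr_inr]
      simp
end

section
/- Let p be an odd prime, let F_{p²} be the field with p² elements, let W = W(F_{p²}) be its ring of Witt vectors, and let σ denote the Frobenius automorphism of W. For a matrix f over W let f^σ denote entrywise application of σ and ᵗf the transpose. Fix integers m ≥ 1 and c ≥ 0, and set X_c = {f ∈ M_m(W) : ᵗf^σ·f = p^c·I_m} and J = {g ∈ M_m(W) : ᵗg^σ·g = I_m}. Then J is a group under matrix multiplication acting on X_c by left multiplication, and X_c is the union of finitely many J-orbits: there exist f₁, …, f_N ∈ X_c such that every f ∈ X_c equals g·fᵢ for some g ∈ J and some i. -/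
open WittVector Matrix

variable (p : ℕ) [Fact p.Prime]

/-- `W = W(𝔽_{p²})`, the Witt vectors of the field with `p²` elements. -/
abbrev Wp2 : Type := WittVector p (GaloisField p 2)

/-- Entrywise application of the Witt vector Frobenius `σ` to a matrix. -/
noncomputable def matSigma {p : ℕ} [Fact p.Prime] {m : ℕ} (f : Matrix (Fin m) (Fin m) (Wp2 p)) :
    Matrix (Fin m) (Fin m) (Wp2 p) :=
  f.map (WittVector.frobenius)

/-- `X_c = {f ∈ M_m(W) : ᵗf^σ · f = p^c · I}`. -/
def Xset (p : ℕ) [Fact p.Prime] (m c : ℕ) : Set (Matrix (Fin m) (Fin m) (Wp2 p)) :=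
  {f | (matSigma f)ᵀ * f = ((p : Wp2 p) ^ c) • (1 : Matrix (Fin m) (Fin m) (Wp2 p))}

/-- `J = {g ∈ M_m(W) : ᵗg^σ · g = I}`. -/
def Jset (p : ℕ) [Fact p.Prime] (m : ℕ) : Set (Matrix (Fin m) (Fin m) (Wp2 p)) :=
  {g | (matSigma g)ᵀ * g = 1}

section Aux

variable {p : ℕ} [Fact p.Prime]

lemma gf_pow_card (x : GaloisField p 2) : x ^ p ^ 2 = x := by
  haveI : Fintype (GaloisField p 2) := Fintype.ofFinite _
  have h : Fintype.card (GaloisField p 2) = p ^ 2 := by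
    rw [← Nat.card_eq_fintype_card]; exact GaloisField.card p 2 two_ne_zero
  rw [← h]; exact FiniteField.pow_card x

lemma sigma_sigma (x : Wp2 p) : WittVector.frobenius (WittVector.frobenius x) = x := by
  ext n
  rw [coeff_frobenius_charP, coeff_frobenius_charP, ← pow_mul, ← pow_two, gf_pow_card]

lemma frob_p_pow (c : ℕ) :
    WittVector.frobenius ((p : Wp2 p) ^ c) = (p : Wp2 p) ^ c := by
  rw [map_pow, map_natCast]

lemma p_pow_ne_zero (c : ℕ) : ((p : Wp2 p) ^ c) ≠ 0 :=
  pow_ne_zero _ (WittVector.irreducible p (k := GaloisField p 2)).ne_zero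

variable {m : ℕ}

lemma matSigma_mul (A B : Matrix (Fin m) (Fin m) (Wp2 p)) :
    matSigma (A * B) = matSigma A * matSigma B :=
  Matrix.map_mul

lemma matSigma_one : matSigma (1 : Matrix (Fin m) (Fin m) (Wp2 p)) = 1 :=
  Matrix.map_one _ (map_zero _) (map_one _)

lemma matSigma_transpose (A : Matrix (Fin m) (Fin m) (Wp2 p)) :
    matSigma Aᵀ = (matSigma A)ᵀ :=
  Matrix.transpose_map

lemma matSigma_matSigma (A : Matrix (Fin m) (Fin m) (Wp2 p)) :
    matSigma (matSigma A) = A := by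
  ext i j
  simp [matSigma, Matrix.map_apply, sigma_sigma]

lemma matSigma_add (A B : Matrix (Fin m) (Fin m) (Wp2 p)) :
    matSigma (A + B) = matSigma A + matSigma B := by
  ext i j
  simp [matSigma, Matrix.map_apply, Matrix.add_apply, map_add]

lemma matSigma_smul (r : Wp2 p) (A : Matrix (Fin m) (Fin m) (Wp2 p)) :
    matSigma (r • A) = WittVector.frobenius r • matSigma A := by
  ext i j
  simp [matSigma, Matrix.map_apply, Matrix.smul_apply, smul_eq_mul, _root_.map_mul]

lemma smul_eq_zero_mat {q : Wp2 p} (hq : q ≠ 0) {M : Matrix (Fin m) (Fin m) (Wp2 p)}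
    (h : q • M = 0) : M = 0 := by
  refine Matrix.ext fun i j => ?_
  have h1 := congrFun (congrFun h i) j
  simp only [Matrix.smul_apply, Matrix.zero_apply, smul_eq_mul] at h1
  simpa using (mul_eq_zero.mp h1).resolve_left hq

lemma mul_cancel_right {A B f : Matrix (Fin m) (Fin m) (Wp2 p)} (hf : f.det ≠ 0)
    (h : A * f = B * f) : A = B := by
  have h0 : (A - B) * f = 0 := by rw [sub_mul, h, sub_self]
  have h1 : (A - B) * (f * f.adjugate) = 0 := by rw [← mul_assoc, h0, zero_mul]
  rw [Matrix.mul_adjugate, mul_smul_comm, mul_one] at h1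
  have h2 := smul_eq_zero_mat hf h1
  exact sub_eq_zero.mp h2

lemma det_ne_zero_of_eq {A f : Matrix (Fin m) (Fin m) (Wp2 p)} {d : Wp2 p} (hd : d ≠ 0)
    (h : A * f = d • 1) : f.det ≠ 0 := by
  intro h0
  have h1 := congrArg Matrix.det h
  rw [Matrix.det_mul, h0, mul_zero, Matrix.smul_one_eq_diagonal, Matrix.det_diagonal] at h1
  simp only [Finset.prod_const, Finset.card_univ, Fintype.card_fin] at h1
  exact pow_ne_zero m hd h1.symm

lemma mul_eq_smul_one_comm {A B : Matrix (Fin m) (Fin m) (Wp2 p)} {d : Wp2 p} (hd : d ≠ 0)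
    (h : A * B = d • 1) : B * A = d • 1 := by
  set K := FractionRing (Wp2 p)
  have hinj : Function.Injective (algebraMap (Wp2 p) K) := IsFractionRing.injective _ _
  set φ := algebraMap (Wp2 p) K with hφ
  have hmap : ∀ (X : Matrix (Fin m) (Fin m) (Wp2 p)) (r : Wp2 p),
      (r • X).map ⇑φ = φ r • X.map ⇑φ := by
    intro X r; ext i j
    simp [Matrix.map_apply, Matrix.smul_apply, smul_eq_mul, _root_.map_mul]
  have hone : (1 : Matrix (Fin m) (Fin m) (Wp2 p)).map ⇑φ = 1 :=
    Matrix.map_one ⇑φ (map_zero φ) (map_one φ)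
  have h' : (A.map ⇑φ) * (B.map ⇑φ) = φ d • (1 : Matrix (Fin m) (Fin m) K) := by
    rw [← Matrix.map_mul (f := φ), h, hmap, hone]
  have hd' : φ d ≠ 0 := fun hc => hd (hinj (by simpa using hc))
  have h1 : ((φ d)⁻¹ • A.map ⇑φ) * B.map ⇑φ = 1 := by
    rw [smul_mul_assoc, h', smul_smul, inv_mul_cancel₀ hd', one_smul]
  have h2 := mul_eq_one_comm.mp h1
  rw [mul_smul_comm] at h2
  have h3 : B.map ⇑φ * A.map ⇑φ = φ d • 1 := by
    calc B.map ⇑φ * A.map ⇑φ = φ d • ((φ d)⁻¹ • (B.map ⇑φ * A.map ⇑φ)) := by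
          rw [smul_smul, mul_inv_cancel₀ hd', one_smul]
    _ = φ d • 1 := by rw [h2]
  apply Matrix.map_injective hinj
  show (B * A).map ⇑φ = (d • (1 : Matrix (Fin m) (Fin m) (Wp2 p))).map ⇑φ
  rw [Matrix.map_mul (f := φ), hmap, hone, h3]

/-- The key orbit lemma: two elements of `X_c` that are congruent mod `p^c`
lie in the same `J`-orbit. -/
lemma orbit_of_congr {c : ℕ} {f f' : Matrix (Fin m) (Fin m) (Wp2 p)}
    (hf : f ∈ Xset p m c) (hf' : f' ∈ Xset p m c)
    (hcong : ∃ h0, f' = f + ((p : Wp2 p) ^ c) • h0) :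
    ∃ g ∈ Jset p m, f' = g * f := by
  obtain ⟨h0, rfl⟩ := hcong
  set q : Wp2 p := (p : Wp2 p) ^ c with hq
  have hqσ : WittVector.frobenius q = q := frob_p_pow c
  have hqne : q ≠ 0 := p_pow_ne_zero c
  have hXf : (matSigma f)ᵀ * f = q • 1 := hf
  have hfdet : f.det ≠ 0 := det_ne_zero_of_eq hqne hXf
  have hffσ : f * (matSigma f)ᵀ = q • 1 := mul_eq_smul_one_comm hqne hXf
  set Fσ := (matSigma f)ᵀ with hFσ
  set Hσ := (matSigma h0)ᵀ with hHσ
  set g := 1 + h0 * Fσ with hg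
  have hgf : g * f = f + q • h0 := by
    rw [hg, add_mul, one_mul, mul_assoc, hXf, mul_smul_comm, mul_one]
  -- σ(f + q•h0)ᵀ = Fσ + q • Hσ
  have hσf' : (matSigma (f + q • h0))ᵀ = Fσ + q • Hσ := by
    rw [matSigma_add, matSigma_smul, hqσ, transpose_add, transpose_smul]
  -- key relation
  have hX' : (Fσ + q • Hσ) * (f + q • h0) = q • 1 := by
    rw [← hσf']; exact hf'
  have hkey : Hσ * (f + q • h0) = -(Fσ * h0) := by
    have e1 : Fσ * (f + q • h0) = q • 1 + q • (Fσ * h0) := by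
      rw [mul_add, hXf, mul_smul_comm]
    have e2 : q • 1 + q • (Fσ * h0) + q • (Hσ * (f + q • h0)) = q • 1 := by
      rw [← e1, ← smul_mul_assoc, ← add_mul, hX']
    have e3 : q • (Fσ * h0) + q • (Hσ * (f + q • h0)) = 0 := by
      have h' := e2
      rw [add_assoc] at h'
      exact add_eq_left.mp h'
    have e4 : Fσ * h0 + Hσ * (f + q • h0) = 0 :=
      smul_eq_zero_mat hqne (by rw [smul_add]; exact e3)
    exact eq_neg_of_add_eq_zero_left (by rw [add_comm]; exact e4)
  refine ⟨g, ?_, hgf.symm⟩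
  -- g ∈ J
  have hσg : (matSigma g)ᵀ = 1 + f * Hσ := by
    rw [hg, matSigma_add, matSigma_one, matSigma_mul, matSigma_transpose, matSigma_matSigma,
      transpose_add, transpose_one, transpose_mul, transpose_transpose]
  have hmain : ((matSigma g)ᵀ * g) * f = 1 * f := by
    rw [mul_assoc, hgf, hσg, add_mul, one_mul, one_mul, mul_assoc, hkey, mul_neg,
      ← mul_assoc, hffσ, smul_mul_assoc, one_mul]
    abel
  exact mul_cancel_right hfdet hmain

/-- Entrywise congruence from truncation. -/
lemma exists_pow_p_mul_of_truncate_eq {c : ℕ} {x y : Wp2 p}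
    (h : WittVector.truncate c x = WittVector.truncate c y) :
    ∃ z, y = x + (p : Wp2 p) ^ c * z := by
  set d := y - x with hdd
  have hker : d ∈ RingHom.ker (WittVector.truncate (p := p) c) := by
    rw [RingHom.mem_ker, hdd, map_sub, h, sub_self]
  have hd : ∀ i < c, d.coeff i = 0 := (WittVector.mem_ker_truncate c d).mp hker
  have h1 : d = (⇑verschiebung)^[c] (d.shift c) := eq_iterate_verschiebung hd
  obtain ⟨w, hw⟩ :=
    ((WittVector.frobenius_bijective p (GaloisField p 2)).surjective.iterate c) (d.shift c)
  refine ⟨w, ?_⟩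
  have hcomm := (WittVector.verschiebung_frobenius_comm (p := p)
    (R := GaloisField p 2)).comp_iterate c
  have hVF : ((⇑verschiebung ∘ ⇑WittVector.frobenius : Wp2 p → Wp2 p))^[c] w
      = w * (p : Wp2 p) ^ c := by
    have hfun : (⇑verschiebung ∘ ⇑WittVector.frobenius : Wp2 p → Wp2 p)
        = fun x => x * (p : Wp2 p) := by
      funext x; exact verschiebung_frobenius x
    rw [hfun, mul_right_iterate]
  have hdw : d = (p : Wp2 p) ^ c * w := by
    rw [h1, ← hw, ← Function.comp_apply (f := (⇑verschiebung)^[c])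
      (g := (⇑WittVector.frobenius)^[c]), ← hcomm, hVF, mul_comm]
  have : y = x + d := by rw [hdd]; ring
  rw [this, hdw]

lemma congr_of_trunc_eq {c : ℕ} {f f' : Matrix (Fin m) (Fin m) (Wp2 p)}
    (h : f.map (WittVector.truncate c) = f'.map (WittVector.truncate c)) :
    ∃ h0, f' = f + ((p : Wp2 p) ^ c) • h0 := by
  have he : ∀ i j, ∃ z, f' i j = f i j + (p : Wp2 p) ^ c * z := by
    intro i j
    apply exists_pow_p_mul_of_truncate_eq
    exact congrFun (congrFun h i) j
  choose z hz using he
  refine ⟨Matrix.of z, ?_⟩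
  refine Matrix.ext fun i j => ?_
  simp only [Matrix.add_apply, Matrix.smul_apply, smul_eq_mul, Matrix.of_apply]
  exact hz i j

end Aux

/-- STATEMENT 18: `J` is a group under multiplication acting on `X_c` by left multiplication,
and `X_c` is a finite union of `J`-orbits. -/
theorem stmt18 (m c : ℕ) (hm : 1 ≤ m) :
    (1 : Matrix (Fin m) (Fin m) (Wp2 p)) ∈ Jset p m ∧
    (∀ g ∈ Jset p m, ∀ h ∈ Jset p m, g * h ∈ Jset p m) ∧
    (∀ g ∈ Jset p m, ∃ g' ∈ Jset p m, g * g' = 1 ∧ g' * g = 1) ∧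
    (∀ g ∈ Jset p m, ∀ f ∈ Xset p m c, g * f ∈ Xset p m c) ∧
    (∃ (N : ℕ) (fs : Fin N → Matrix (Fin m) (Fin m) (Wp2 p)),
      (∀ i, fs i ∈ Xset p m c) ∧
      ∀ f ∈ Xset p m c, ∃ g ∈ Jset p m, ∃ i, f = g * fs i) := by
  classical
  refine ⟨?_, ?_, ?_, ?_, ?_⟩
  · show (matSigma 1)ᵀ * 1 = 1
    rw [matSigma_one, transpose_one, one_mul]
  · intro g hg h hh
    show (matSigma (g * h))ᵀ * (g * h) = 1
    rw [matSigma_mul, transpose_mul, mul_assoc, ← mul_assoc ((matSigma g)ᵀ), hg, one_mul, hh]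
  · intro g hg
    have hg' : (matSigma g)ᵀ * g = 1 := hg
    refine ⟨(matSigma g)ᵀ, ?_, mul_eq_one_comm.mp hg', hg'⟩
    show (matSigma ((matSigma g)ᵀ))ᵀ * (matSigma g)ᵀ = 1
    rw [matSigma_transpose, matSigma_matSigma, transpose_transpose]
    exact mul_eq_one_comm.mp hg'
  · intro g hg f hf
    show (matSigma (g * f))ᵀ * (g * f) = ((p : Wp2 p) ^ c) • 1
    rw [matSigma_mul, transpose_mul, mul_assoc, ← mul_assoc ((matSigma g)ᵀ), hg, one_mul]
    exact hf
  · -- finiteness of the orbit space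
    haveI : Fintype (GaloisField p 2) := Fintype.ofFinite _
    set ρ : Matrix (Fin m) (Fin m) (Wp2 p) →
        Matrix (Fin m) (Fin m) (TruncatedWittVector p c (GaloisField p 2)) :=
      fun f => f.map (WittVector.truncate c) with hρ
    set S := {t : Matrix (Fin m) (Fin m) (TruncatedWittVector p c (GaloisField p 2)) //
      ∃ f, f ∈ Xset p m c ∧ ρ f = t} with hS
    haveI : Finite S := Subtype.finite
    obtain ⟨N, ⟨e⟩⟩ := Finite.exists_equiv_fin S
    refine ⟨N, fun i => (e.symm i).2.choose, fun i => (e.symm i).2.choose_spec.1, ?_⟩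
    intro f hf
    set t : S := ⟨ρ f, ⟨f, hf, rfl⟩⟩ with ht
    have hrep := (e.symm (e t)).2.choose_spec
    have htt : (e.symm (e t)).1 = ρ f := by rw [e.symm_apply_apply]
    have htrunc : ρ ((e.symm (e t)).2.choose) = ρ f := by rw [hrep.2, htt]
    obtain ⟨g, hgJ, hgf⟩ := orbit_of_congr hrep.1 hf (congr_of_trunc_eq htrunc)
    exact ⟨g, hgJ, e t, hgf⟩
end

section
/- Let p be an odd prime, k a perfect field of characteristic p, and c ≥ 0 an integer. Let Fr denote the Witt-vector Frobenius ring endomorphism (on W(k), where it is the usual Frobenius σ, and on W(W(k))), and let π: W(W(k)) → W(k) be the ring homomorphism induced by functoriality from the residue map W(k) → k (reduction modulo p, identified with the 0-th component map). Then for every w₀ ∈ W(k) satisfying Fr²(w₀) = w₀ and w₀·Fr(w₀) = p^c, there exists w ∈ W(W(k)) with Fr²(w) = w, w·Fr(w) = p^c, and π(w) = w₀. -/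
open WittVector Finset Function

namespace Stmt19Aux

variable {p : ℕ} [hp : Fact p.Prime]

/-- iterate of a ring hom, as a ring hom -/
def iterHom {A : Type*} [CommRing A] (f : A →+* A) : ℕ → (A →+* A)
  | 0 => RingHom.id A
  | n + 1 => f.comp (iterHom f n)

@[simp] theorem iterHom_zero {A : Type*} [CommRing A] (f : A →+* A) (x : A) :
    iterHom f 0 x = x := rfl

@[simp] theorem iterHom_succ {A : Type*} [CommRing A] (f : A →+* A) (n : ℕ) (x : A) :
    iterHom f (n + 1) x = f (iterHom f n x) := rfl

theorem iterHom_succ' {A : Type*} [CommRing A] (f : A →+* A) (n : ℕ) (x : A) :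
    iterHom f (n + 1) x = iterHom f n (f x) := by
  induction n generalizing x with
  | zero => rfl
  | succ n ih => rw [iterHom_succ, ih, iterHom_succ]

theorem ghost_eq {R : Type*} [CommRing R] (x : WittVector p R) (n : ℕ) :
    WittVector.ghostComponent n x
      = ∑ i ∈ range (n + 1), (p : R) ^ i * x.coeff i ^ p ^ (n - i) := by
  rw [ghostComponent_apply, aeval_wittPolynomial]

theorem ghost_zero_eq {R : Type*} [CommRing R] (x : WittVector p R) :
    WittVector.ghostComponent 0 x = x.coeff 0 := by
  simp [ghost_eq]

theorem pow_cancel {R : Type*} [CommRing R] (htf : ∀ x : R, (p : R) * x = 0 → x = 0)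
    {n : ℕ} {a b : R} (h : (p : R) ^ n * a = (p : R) ^ n * b) : a = b := by
  induction n generalizing a b with
  | zero => simpa using h
  | succ n ih =>
    rw [pow_succ, mul_assoc, mul_assoc] at h
    have h2 : (p : R) * a = (p : R) * b := ih h
    have h3 : (p : R) * (a - b) = 0 := by rw [mul_sub, h2, sub_self]
    exact sub_eq_zero.mp (htf _ h3)

theorem ghost_injective {R : Type*} [CommRing R] (htf : ∀ x : R, (p : R) * x = 0 → x = 0)
    {x y : WittVector p R} (h : ∀ n, ghostComponent n x = ghostComponent n y) : x = y := by
  ext n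
  induction n using Nat.strong_induction_on with
  | _ n ih =>
    have hn := h n
    rw [ghost_eq, ghost_eq, sum_range_succ, sum_range_succ,
      sum_congr rfl (fun i hi => by rw [ih i (mem_range.mp hi)])] at hn
    have hA := pow_cancel htf (add_left_cancel hn)
    simpa using hA

/-- the fundamental decomposition `x = [x₀] + V (shift x)`. -/
theorem witt_decomp {R : Type*} [CommRing R] (x : WittVector p R) :
    x = teichmuller p (x.coeff 0)
      + verschiebung (WittVector.mk p fun i => x.coeff (i + 1)) := by
  have htf : ∀ q : MvPolynomial ℕ ℤ, (p : MvPolynomial ℕ ℤ) * q = 0 → q = 0 := by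
    intro q hq
    have hp0 : (p : MvPolynomial ℕ ℤ) ≠ 0 := by
      exact_mod_cast Nat.cast_ne_zero.mpr hp.out.ne_zero
    rcases mul_eq_zero.mp hq with h | h
    · exact absurd h hp0
    · exact h
  have key : (WittVector.mk p fun i => (MvPolynomial.X i : MvPolynomial ℕ ℤ))
      = teichmuller p (MvPolynomial.X 0)
        + verschiebung (WittVector.mk p fun i => MvPolynomial.X (i + 1)) := by
    apply ghost_injective htf
    intro n
    rw [map_add]
    cases n with
    | zero =>
      rw [ghost_zero_eq, ghost_zero_eq, ghost_zero_eq]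
      simp [WittVector.coeff_mk, verschiebung_coeff_zero, teichmuller_coeff_zero]
    | succ n =>
      rw [ghostComponent_teichmuller, ghostComponent_verschiebung, ghost_eq, ghost_eq,
        sum_range_succ', mul_sum]
      simp only [WittVector.coeff_mk, pow_zero, one_mul, Nat.sub_zero, Nat.succ_sub_succ]
      rw [add_comm]
      congr 1
      refine sum_congr rfl fun i hi => ?_
      ring
  have hx : WittVector.map (MvPolynomial.aeval x.coeff : MvPolynomial ℕ ℤ →ₐ[ℤ] R).toRingHom
      (WittVector.mk p fun i => MvPolynomial.X i) = x := by
    apply WittVector.ext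
    intro n
    rw [WittVector.map_coeff]
    simp [WittVector.coeff_mk]
  have := congrArg
    (WittVector.map (MvPolynomial.aeval x.coeff : MvPolynomial ℕ ℤ →ₐ[ℤ] R).toRingHom) key
  rw [hx, map_add, map_teichmuller, map_verschiebung] at this
  have h1 : (MvPolynomial.aeval x.coeff : MvPolynomial ℕ ℤ →ₐ[ℤ] R).toRingHom
      (MvPolynomial.X 0) = x.coeff 0 := by simp
  have h2 : WittVector.map (MvPolynomial.aeval x.coeff : MvPolynomial ℕ ℤ →ₐ[ℤ] R).toRingHom
      (WittVector.mk p fun i => MvPolynomial.X (i + 1))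
      = WittVector.mk p fun i => x.coeff (i + 1) := by
    apply WittVector.ext
    intro n
    rw [WittVector.map_coeff]
    simp [WittVector.coeff_mk]
  rw [h1, h2] at this
  exact this

end Stmt19Aux

namespace Stmt19Aux

section CharP
variable {p : ℕ} [hp : Fact p.Prime] {k : Type*} [Field k] [CharP k p] [PerfectRing k p]

local notation "𝕎" => WittVector p

/-- `W(k)` is `p`-torsion free. -/
theorem wtorsionfree (x : 𝕎 k) (h : (p : 𝕎 k) * x = 0) : x = 0 := by
  have h1 : verschiebung (frobenius x) = 0 := by
    rw [verschiebung_frobenius, mul_comm]; exact h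
  have h2 : WittVector.frobenius x = 0 := by
    apply WittVector.ext
    intro n
    have := congrArg (fun z : 𝕎 k => z.coeff (n + 1)) h1
    simpa [verschiebung_coeff_succ] using this
  have h3 : WittVector.frobenius x = WittVector.frobenius 0 := by
    rw [h2, map_zero]
  exact (frobenius_bijective p k).injective h3

/-- Verschiebung as `p` times inverse Frobenius. -/
theorem versch_eq (y : 𝕎 k) :
    verschiebung y = (p : 𝕎 k) * (frobeniusEquiv p k).symm y := by
  have hy : WittVector.frobenius ((frobeniusEquiv p k).symm y) = y := by
    have := (frobeniusEquiv p k).apply_symm_apply y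
    rwa [WittVector.frobeniusEquiv_apply] at this
  conv_lhs => rw [← hy]
  rw [verschiebung_frobenius, mul_comm]

theorem dvd_of_coeff_zero {x : 𝕎 k} (h : x.coeff 0 = 0) : (p : 𝕎 k) ∣ x := by
  have hd := witt_decomp x
  rw [h, teichmuller_zero, zero_add] at hd
  rw [hd, versch_eq]
  exact Dvd.intro _ rfl

theorem coeff_zero_of_sub_coeff {x y : 𝕎 k} (h : x.coeff 0 = y.coeff 0) :
    (p : 𝕎 k) ∣ x - y := by
  apply dvd_of_coeff_zero
  have : WittVector.ghostComponent 0 (x - y)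
      = WittVector.ghostComponent 0 x - WittVector.ghostComponent 0 y := map_sub _ _ _
  rw [ghost_zero_eq, ghost_zero_eq, ghost_zero_eq] at this
  rw [this, h, sub_self]

theorem p_pow_mul_eq (m : ℕ) (z : 𝕎 k) :
    (p : 𝕎 k) ^ m * z = verschiebung^[m] (frobenius^[m] z) := by
  induction m generalizing z with
  | zero => simp
  | succ m ih =>
    have : (p : 𝕎 k) ^ (m + 1) * z = (p : 𝕎 k) ^ m * (verschiebung (frobenius z)) := by
      rw [verschiebung_frobenius]; ring
    rw [this, ih]
    have hcomm : ∀ w : 𝕎 k, frobenius^[m] (verschiebung w) = verschiebung (frobenius^[m] w) := by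
      intro w
      exact (Function.Commute.iterate_right verschiebung_frobenius_comm m w).symm
    rw [hcomm]
    simp [Function.iterate_succ_apply, Function.iterate_succ_apply']

theorem iter_versch_coeff_lt {m i : ℕ} (h : i < m) (t : 𝕎 k) :
    (verschiebung^[m] t).coeff i = 0 := by
  induction m generalizing i with
  | zero => omega
  | succ m ih =>
    rw [iterate_succ_apply']
    cases i with
    | zero => exact verschiebung_coeff_zero _
    | succ i => rw [verschiebung_coeff_succ]; exact ih (by omega)

theorem eq_zero_of_forall_dvd {d : 𝕎 k} (h : ∀ n : ℕ, (p : 𝕎 k) ^ (n + 1) ∣ d) : d = 0 := by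
  apply WittVector.ext
  intro n
  obtain ⟨z, hz⟩ := h n
  rw [hz, p_pow_mul_eq]
  simpa using iter_versch_coeff_lt (Nat.lt_succ_self n) (frobenius^[n + 1] z)

/-- Frobenius is a lift of the `p`-power map. -/
theorem frob_lift (a : 𝕎 k) : (p : 𝕎 k) ∣ WittVector.frobenius a - a ^ p := by
  apply coeff_zero_of_sub_coeff
  have h2 : (a ^ p).coeff 0 = a.coeff 0 ^ p := by
    have : WittVector.ghostComponent 0 (a ^ p)
        = (WittVector.ghostComponent 0 a) ^ p := map_pow _ _ _
    rwa [ghost_zero_eq, ghost_zero_eq] at this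
  rw [coeff_frobenius_charP, h2]

end CharP

end Stmt19Aux

namespace Stmt19Aux

section CharP2
variable {p : ℕ} [hp : Fact p.Prime] {k : Type*} [Field k] [CharP k p] [PerfectRing k p]

local notation "𝕎" => WittVector p

variable (p k) in
/-- Witt Frobenius as a ring hom (abbreviation). -/
noncomputable def frobH : WittVector p k →+* WittVector p k := WittVector.frobenius

variable (p k) in
/-- inverse Witt Frobenius as a ring hom. -/
noncomputable def symW : WittVector p k →+* WittVector p k :=
  ((WittVector.frobeniusEquiv p k).symm : WittVector p k →+* WittVector p k)

variable (p k) in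
/-- inverse frobenius on `k` as a ring hom. -/
noncomputable def psiH : k →+* k := ((_root_.frobeniusEquiv k p).symm : k →+* k)

theorem frobH_apply (z : 𝕎 k) : frobH p k z = WittVector.frobenius z := rfl

theorem symW_frob (z : 𝕎 k) : symW p k (WittVector.frobenius z) = z := by
  have := (WittVector.frobeniusEquiv p k).symm_apply_apply z
  rwa [WittVector.frobeniusEquiv_apply] at this

theorem frob_symW (z : 𝕎 k) : WittVector.frobenius (symW p k z) = z := by
  have := (WittVector.frobeniusEquiv p k).apply_symm_apply z
  rwa [WittVector.frobeniusEquiv_apply] at this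

theorem iter_symW_iter_frob (n : ℕ) (z : 𝕎 k) :
    iterHom (symW p k) n (iterHom (frobH p k) n z) = z := by
  induction n generalizing z with
  | zero => rfl
  | succ n ih =>
    rw [iterHom_succ' (symW p k), iterHom_succ (frobH p k), frobH_apply, symW_frob, ih]

theorem psiH_pow (a : k) : (psiH p k a) ^ p = a := by
  have := frobenius_apply_frobeniusEquiv_symm k p a
  rwa [frobenius_def] at this

theorem coeff_zero_symW (z : 𝕎 k) :
    (symW p k z).coeff 0 = psiH p k (z.coeff 0) := by
  apply frobenius_inj k p
  rw [frobenius_def, frobenius_def]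
  rw [← coeff_frobenius_charP, frob_symW, psiH_pow]

theorem coeff_zero_iter_symW (n : ℕ) (z : 𝕎 k) :
    (iterHom (symW p k) n z).coeff 0 = iterHom (psiH p k) n (z.coeff 0) := by
  induction n generalizing z with
  | zero => rfl
  | succ n ih =>
    rw [iterHom_succ' (symW p k), iterHom_succ' (psiH p k), ih, coeff_zero_symW]

theorem frob_teichmuller (s : k) :
    WittVector.frobenius (teichmuller p s) = teichmuller p (s ^ p) := by
  rw [frobenius_eq_map_frobenius, map_teichmuller, frobenius_def]

theorem symW_teichmuller (s : k) :
    symW p k (teichmuller p s) = teichmuller p (psiH p k s) := by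
  apply (frobenius_bijective p k).injective
  rw [frob_symW, frob_teichmuller, psiH_pow]

theorem iter_symW_teichmuller (n : ℕ) (s : k) :
    iterHom (symW p k) n (teichmuller p s) = teichmuller p (iterHom (psiH p k) n s) := by
  induction n generalizing s with
  | zero => rfl
  | succ n ih =>
    rw [iterHom_succ' (symW p k), iterHom_succ' (psiH p k), symW_teichmuller, ih]

theorem iter_psi_pow (i j : ℕ) (a : k) :
    (iterHom (psiH p k) (i + j) a) ^ p ^ j = iterHom (psiH p k) i a := by
  induction j with
  | zero => simp
  | succ j ihj =>
    have hexp : p ^ (j + 1) = p * p ^ j := by rw [pow_succ, mul_comm]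
    rw [hexp, pow_mul, show i + (j+1) = (i+j) + 1 by omega, iterHom_succ, psiH_pow, ihj]

/-- Dwork-style existence of a Witt vector over `W(k)` with prescribed ghost components
`σⁿ x`. -/
theorem dwork_exists (x : 𝕎 k) :
    ∃ c : ℕ → 𝕎 k, ∀ m : ℕ,
      ∑ i ∈ range (m + 1), (p : 𝕎 k) ^ i * c i ^ p ^ (m - i)
        = iterHom (frobH p k) m x := by
  classical
  have uniq : ∀ (j i : ℕ) (c c' : ℕ → 𝕎 k),
      (∀ m ≤ i, ∑ l ∈ range (m + 1), (p : 𝕎 k) ^ l * c l ^ p ^ (m - l)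
        = iterHom (frobH p k) m x) →
      (∀ m ≤ i, ∑ l ∈ range (m + 1), (p : 𝕎 k) ^ l * c' l ^ p ^ (m - l)
        = iterHom (frobH p k) m x) →
      j ≤ i → c j = c' j := by
    intro j
    induction j using Nat.strong_induction_on with
    | _ j ih =>
      intro i c c' h h' hj
      have e1 := (h j hj).trans (h' j hj).symm
      rw [sum_range_succ, sum_range_succ,
        sum_congr rfl (fun l hl => by
          rw [ih l (mem_range.mp hl) i c c' h h'
            (le_trans (Nat.le_of_lt (mem_range.mp hl)) hj)])] at e1
      have := pow_cancel (p := p) wtorsionfree (add_left_cancel e1)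
      simpa using this
  have step : ∀ (n : ℕ) (c : ℕ → 𝕎 k),
      (∑ i ∈ range (n + 1), (p : 𝕎 k) ^ i * c i ^ p ^ (n - i) = iterHom (frobH p k) n x) →
      ∃ y, (p : 𝕎 k) ^ (n + 1) * y
        = iterHom (frobH p k) (n + 1) x
          - ∑ i ∈ range (n + 1), (p : 𝕎 k) ^ i * c i ^ p ^ (n + 1 - i) := by
    intro n c h
    have hFn : iterHom (frobH p k) (n + 1) x
        = ∑ i ∈ range (n + 1),
            (p : 𝕎 k) ^ i * (WittVector.frobenius (c i)) ^ p ^ (n - i) := by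
      rw [iterHom_succ, ← h, map_sum]
      refine sum_congr rfl fun i hi => ?_
      rw [map_mul, map_pow, map_pow, map_natCast, frobH_apply]
    have hdvd : (p : 𝕎 k) ^ (n + 1) ∣ iterHom (frobH p k) (n + 1) x
        - ∑ i ∈ range (n + 1), (p : 𝕎 k) ^ i * c i ^ p ^ (n + 1 - i) := by
      rw [hFn, ← sum_sub_distrib]
      apply dvd_sum
      intro i hi
      have hi' : i ≤ n := Nat.lt_succ_iff.mp (mem_range.mp hi)
      have hexp : p ^ (n + 1 - i) = p * p ^ (n - i) := by
        rw [show n + 1 - i = (n - i) + 1 by omega, pow_succ, mul_comm]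
      have hpow : c i ^ p ^ (n + 1 - i) = (c i ^ p) ^ p ^ (n - i) := by
        rw [hexp, pow_mul]
      rw [hpow, ← mul_sub]
      have hsplit : (p : 𝕎 k) ^ (n + 1) = (p : 𝕎 k) ^ i * (p : 𝕎 k) ^ ((n - i) + 1) := by
        rw [← pow_add]; congr 1; omega
      rw [hsplit]
      exact mul_dvd_mul_left _ (dvd_sub_pow_of_dvd_sub (frob_lift (c i)) (n - i))
    obtain ⟨y, hy⟩ := hdvd
    exact ⟨y, hy.symm⟩
  have partial_ex : ∀ n : ℕ, ∃ c : ℕ → 𝕎 k, ∀ m ≤ n,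
      ∑ i ∈ range (m + 1), (p : 𝕎 k) ^ i * c i ^ p ^ (m - i)
        = iterHom (frobH p k) m x := by
    intro n
    induction n with
    | zero =>
      refine ⟨fun _ => x, fun m hm => ?_⟩
      have hm0 : m = 0 := Nat.le_zero.mp hm
      subst hm0
      rw [show (0:ℕ) + 1 = 1 from rfl, Finset.sum_range_one]
      simp
    | succ n ihn =>
      obtain ⟨c, hc⟩ := ihn
      obtain ⟨y, hy⟩ := step n c (hc n le_rfl)
      refine ⟨Function.update c (n + 1) y, fun m hm => ?_⟩
      rcases eq_or_lt_of_le hm with rfl | hm'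
      · rw [sum_range_succ,
          sum_congr rfl (fun i hi => by
            rw [Function.update_of_ne (by have := mem_range.mp hi; omega)]),
          Function.update_self, Nat.sub_self, pow_zero, pow_one]
        linear_combination hy
      · have hm'' : m ≤ n := by omega
        rw [sum_congr rfl (fun i hi => by
          rw [Function.update_of_ne (by have := mem_range.mp hi; omega)])]
        exact hc m hm''
  choose cs hcs using partial_ex
  refine ⟨fun n => cs n n, fun m => ?_⟩
  show ∑ i ∈ range (m + 1), (p : 𝕎 k) ^ i * (cs i i) ^ p ^ (m - i) = iterHom (frobH p k) m x
  rw [sum_congr rfl (fun i hi => by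
    have hi' : i ≤ m := Nat.lt_succ_iff.mp (mem_range.mp hi)
    rw [uniq i i (cs i) (cs m) (hcs i) (fun m' hm' => hcs m m' (le_trans hm' hi')) le_rfl])]
  exact hcs m m le_rfl

/-- Every Witt vector is congruent mod `p^(n+1)` to its truncated Teichmüller expansion. -/
theorem decomp_dvd (n : ℕ) (x : 𝕎 k) :
    (p : 𝕎 k) ^ (n + 1) ∣ x - ∑ i ∈ range (n + 1),
      (p : 𝕎 k) ^ i * teichmuller p (iterHom (psiH p k) i (x.coeff i)) := by
  induction n generalizing x with
  | zero =>
    show (p : 𝕎 k) ^ (0 + 1) ∣ _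
    rw [pow_one, Finset.sum_range_one, pow_zero, one_mul]
    apply coeff_zero_of_sub_coeff
    rw [iterHom_zero, teichmuller_coeff_zero]
  | succ n ih =>
    have hd := witt_decomp x
    set u : 𝕎 k := WittVector.mk p (fun i => x.coeff (i + 1)) with hu
    obtain ⟨z, hz⟩ := ih u
    have hYsplit : ∑ i ∈ range (n + 2),
        (p : 𝕎 k) ^ i * teichmuller p (iterHom (psiH p k) i (x.coeff i))
        = teichmuller p (x.coeff 0)
          + (p : 𝕎 k) * ∑ i ∈ range (n + 1),
              (p : 𝕎 k) ^ i * teichmuller p (iterHom (psiH p k) (i + 1) (x.coeff (i + 1))) := by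
      have hterm : ∀ i ∈ range (n + 1),
          (p : 𝕎 k) ^ (i + 1) * teichmuller p (iterHom (psiH p k) (i + 1) (x.coeff (i + 1)))
          = (p : 𝕎 k) * ((p : 𝕎 k) ^ i
              * teichmuller p (iterHom (psiH p k) (i + 1) (x.coeff (i + 1)))) :=
        fun i _ => by ring
      rw [sum_range_succ', sum_congr rfl hterm, ← mul_sum]
      simp only [pow_zero, one_mul, iterHom_zero]
      rw [add_comm]
    have hsym : symW p k (u - ∑ i ∈ range (n + 1),
          (p : 𝕎 k) ^ i * teichmuller p (iterHom (psiH p k) i (u.coeff i)))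
        = symW p k u - ∑ i ∈ range (n + 1),
            (p : 𝕎 k) ^ i * teichmuller p (iterHom (psiH p k) (i + 1) (x.coeff (i + 1))) := by
      rw [map_sub, map_sum]
      congr 1
      refine sum_congr rfl fun i hi => ?_
      rw [map_mul, map_pow, map_natCast, symW_teichmuller]
      rfl
    refine ⟨symW p k z, ?_⟩
    have hVu : verschiebung u = (p : 𝕎 k) * symW p k u := versch_eq u
    calc x - ∑ i ∈ range (n + 2),
        (p : 𝕎 k) ^ i * teichmuller p (iterHom (psiH p k) i (x.coeff i))
        = verschiebung u - (p : 𝕎 k) * ∑ i ∈ range (n + 1),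
            (p : 𝕎 k) ^ i * teichmuller p (iterHom (psiH p k) (i + 1) (x.coeff (i + 1))) := by
          rw [hYsplit]
          nth_rewrite 1 [hd]
          ring
      _ = (p : 𝕎 k) * (symW p k u - ∑ i ∈ range (n + 1),
            (p : 𝕎 k) ^ i * teichmuller p (iterHom (psiH p k) (i + 1) (x.coeff (i + 1)))) := by
          rw [hVu]; ring
      _ = (p : 𝕎 k) * symW p k (u - ∑ i ∈ range (n + 1),
            (p : 𝕎 k) ^ i * teichmuller p (iterHom (psiH p k) i (u.coeff i))) := by rw [hsym]
      _ = (p : 𝕎 k) ^ (n + 2) * symW p k z := by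
          rw [hz, map_mul, map_pow, map_natCast]
          ring

/-- the main divisibility: if the `cᵢ` solve the ghost equations for `x`, then
`x` is congruent to the Teichmüller expansion built from the residues of the `cᵢ`. -/
theorem main_dvd (x : 𝕎 k) (c : ℕ → 𝕎 k) (n : ℕ)
    (h : ∑ i ∈ range (n + 1), (p : 𝕎 k) ^ i * c i ^ p ^ (n - i) = iterHom (frobH p k) n x) :
    (p : 𝕎 k) ^ (n + 1) ∣ x - ∑ i ∈ range (n + 1),
      (p : 𝕎 k) ^ i * teichmuller p (iterHom (psiH p k) i ((c i).coeff 0)) := by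
  have h2 : ∑ i ∈ range (n + 1), (p : 𝕎 k) ^ i * (iterHom (symW p k) n (c i)) ^ p ^ (n - i)
      = x := by
    have hmap := congrArg (iterHom (symW p k) n) h
    rw [iter_symW_iter_frob] at hmap
    rw [← hmap, map_sum]
    refine sum_congr rfl fun i hi => ?_
    rw [map_mul, map_pow, map_natCast, map_pow]
  rw [← h2, ← sum_sub_distrib]
  apply dvd_sum
  intro i hi
  have hi' : i ≤ n := Nat.lt_succ_iff.mp (mem_range.mp hi)
  rw [← mul_sub]
  have hsplit : (p : 𝕎 k) ^ (n + 1) = (p : 𝕎 k) ^ i * (p : 𝕎 k) ^ ((n - i) + 1) := by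
    rw [← pow_add]; congr 1; omega
  rw [hsplit]
  apply mul_dvd_mul_left
  have hT : teichmuller p (iterHom (psiH p k) i ((c i).coeff 0))
      = (teichmuller p (iterHom (psiH p k) n ((c i).coeff 0))) ^ p ^ (n - i) := by
    rw [← map_pow]
    congr 1
    have := iter_psi_pow (p := p) (k := k) i (n - i) ((c i).coeff 0)
    rw [Nat.add_sub_cancel' hi'] at this
    exact this.symm
  rw [hT]
  refine dvd_sub_pow_of_dvd_sub ?_ (n - i)
  apply coeff_zero_of_sub_coeff
  rw [coeff_zero_iter_symW, teichmuller_coeff_zero]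

end CharP2

end Stmt19Aux

open Stmt19Aux

/-- The residue map `W(k) → k`, i.e. the `0`-th ghost component, which for a
perfect field `k` of characteristic `p` is the `0`-th coefficient map, i.e. reduction
modulo `p`. -/
noncomputable def residue (p : ℕ) [Fact p.Prime] (k : Type*) [CommRing k] :
    WittVector p k →+* k :=
  WittVector.ghostComponent 0

/-- The map `π : W(W(k)) → W(k)` induced by functoriality from the residue map `W(k) → k`. -/
noncomputable def piMap (p : ℕ) [Fact p.Prime] (k : Type*) [CommRing k] :
    WittVector p (WittVector p k) →+* WittVector p k :=
  WittVector.map (residue p k)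

/-- STATEMENT 19: every `w₀ ∈ W(k)` with `Fr²(w₀) = w₀` and `w₀ · Fr(w₀) = p^c` lifts to
an element `w ∈ W(W(k))` with `Fr²(w) = w`, `w · Fr(w) = p^c` and `π(w) = w₀`. -/
theorem stmt19 (p : ℕ) [Fact p.Prime] (hp : Odd p)
    (k : Type*) [Field k] [CharP k p] [PerfectRing k p]
    (c : ℕ) (w₀ : WittVector p k)
    (h1 : WittVector.frobenius (WittVector.frobenius w₀) = w₀)
    (h2 : w₀ * WittVector.frobenius w₀ = (p : WittVector p k) ^ c) :
    ∃ w : WittVector p (WittVector p k),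
      WittVector.frobenius (WittVector.frobenius w) = w ∧
      w * WittVector.frobenius w = (p : WittVector p (WittVector p k)) ^ c ∧
      piMap p k w = w₀ := by
  classical
  obtain ⟨co, hco⟩ := dwork_exists (p := p) (k := k) w₀
  set w : WittVector p (WittVector p k) := WittVector.mk p co with hw
  have gw : ∀ n, WittVector.ghostComponent n w = iterHom (frobH p k) n w₀ := by
    intro n
    rw [ghost_eq]
    simp only [hw, WittVector.coeff_mk]
    exact hco n
  have htf : ∀ x : WittVector p k, (p : WittVector p k) * x = 0 → x = 0 := wtorsionfree
  refine ⟨w, ?_, ?_, ?_⟩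
  · -- Fr² w = w
    apply ghost_injective htf
    intro n
    rw [WittVector.ghostComponent_frobenius, WittVector.ghostComponent_frobenius, gw, gw,
      iterHom_succ', iterHom_succ']
    rw [show frobH p k (frobH p k w₀) = w₀ from h1]
  · -- w * Fr w = p^c
    apply ghost_injective htf
    intro n
    rw [map_mul, WittVector.ghostComponent_frobenius, gw, gw, iterHom_succ', ← map_mul,
      show w₀ * frobH p k w₀ = (p : WittVector p k) ^ c from h2,
      map_pow, map_natCast, map_pow, map_natCast]
  · -- piMap w = w₀
    have hcoeff : ∀ i, (piMap p k w).coeff i = (co i).coeff 0 := by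
      intro i
      rw [piMap, WittVector.map_coeff]
      show WittVector.ghostComponent 0 (w.coeff i) = _
      rw [ghost_zero_eq]
      simp [hw, WittVector.coeff_mk]
    have main : ∀ n : ℕ, (p : WittVector p k) ^ (n + 1) ∣ piMap p k w - w₀ := by
      intro n
      have d1 := decomp_dvd (p := p) (k := k) n (piMap p k w)
      rw [sum_congr rfl (fun i _ => by rw [hcoeff i])] at d1
      have d2 := main_dvd (p := p) (k := k) w₀ co n (hco n)
      have := dvd_sub d1 d2
      rwa [sub_sub_sub_cancel_right] at this
    have : piMap p k w - w₀ = 0 := eq_zero_of_forall_dvd main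
    exact sub_eq_zero.mp this
end
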